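/- arXiv:2410.11288 — 9 statements merged into one kernel-verified Lean document; each statement's English description precedes it below -/
import Mathlib

section
/- For every graph G and every induced subgraph H of G (obtained by deleting a set of vertices), the number of maximal induced matchings of G is at least the number of maximal induced matchings of H, i.e., |M_H| ≤ |M_G|, where M_X denotes the set of maximal induced matchings of X. -/
open SimpleGraph

/-- An induced matching: a set of edges of `G` such that the endpoints of distinct
edges are distinct and non-adjacent (i.e. the endpoints induce a 1-regular subgraph). -/
def IsInducedMatching {V : Type*} (G : SimpleGraph V) (M : Set (Sym2 V)) : Prop :=
  M ⊆ G.edgeSet ∧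
    ∀ e ∈ M, ∀ f ∈ M, e ≠ f → ∀ a ∈ e, ∀ b ∈ f, a ≠ b ∧ ¬ G.Adj a b

/-- A maximal induced matching: an induced matching not properly contained in another. -/
def IsMaximalInducedMatching {V : Type*} (G : SimpleGraph V) (M : Set (Sym2 V)) : Prop :=
  IsInducedMatching G M ∧ ∀ M' : Set (Sym2 V), IsInducedMatching G M' → M ⊆ M' → M' = M

/-- The number of maximal induced matchings of `G`. -/
noncomputable def mim {V : Type*} (G : SimpleGraph V) : ℕ :=
  {M : Set (Sym2 V) | IsMaximalInducedMatching G M}.ncard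

section Aux

variable {V : Type*} (G : SimpleGraph V) {S : Set V}

/-- Lift a set of edges on `S` to edges on `V`. -/
def edgeLift {S : Set V} (M : Set (Sym2 S)) : Set (Sym2 V) :=
  Sym2.map (Subtype.val : S → V) '' M

lemma edgeLift_injective : Function.Injective (edgeLift (V := V) (S := S)) :=
  Set.image_injective.mpr (Sym2.map.injective Subtype.val_injective)

lemma edgeLift_isInducedMatching {M : Set (Sym2 S)}
    (hM : IsInducedMatching (G.induce S) M) : IsInducedMatching G (edgeLift M) := by
  obtain ⟨hsub, hpair⟩ := hM
  constructor
  · rintro e ⟨e', he', rfl⟩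
    induction e' with
    | _ a b =>
      have := hsub he'
      rw [SimpleGraph.mem_edgeSet, SimpleGraph.comap_adj] at this
      rw [Sym2.map_pair_eq, SimpleGraph.mem_edgeSet]
      exact this
  · rintro e ⟨e', he', rfl⟩ f ⟨f', hf', rfl⟩ hef a ha b hb
    have hef' : e' ≠ f' := fun h => hef (by rw [h])
    rw [Sym2.mem_map] at ha hb
    obtain ⟨a', ha', rfl⟩ := ha
    obtain ⟨b', hb', rfl⟩ := hb
    obtain ⟨hne, hnadj⟩ := hpair e' he' f' hf' hef' a' ha' b' hb'
    refine ⟨fun h => hne (Subtype.val_injective h), ?_⟩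
    intro h
    exact hnadj h

lemma exists_maximal_extension [Fintype V] {M0 : Set (Sym2 V)}
    (h0 : IsInducedMatching G M0) :
    ∃ M, IsMaximalInducedMatching G M ∧ M0 ⊆ M := by
  classical
  have hfin : {M' : Set (Sym2 V) | IsInducedMatching G M' ∧ M0 ⊆ M'}.Finite :=
    Set.toFinite _
  obtain ⟨M, hM, hmax⟩ := Set.Finite.exists_maximalFor id _ hfin ⟨M0, h0, subset_rfl⟩
  refine ⟨M, ⟨hM.1, ?_⟩, hM.2⟩
  intro M' hM' hsub
  exact Set.Subset.antisymm (hmax ⟨hM', hM.2.trans hsub⟩ hsub) hsub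

/-- Recovery: a maximal induced matching of the induced subgraph can be recovered from
any induced matching of `G` extending its lift. -/
lemma recover {M : Set (Sym2 S)} {N : Set (Sym2 V)}
    (hM : IsMaximalInducedMatching (G.induce S) M)
    (hN : IsInducedMatching G N) (hsub : edgeLift M ⊆ N) :
    N ∩ Set.range (Sym2.map (Subtype.val : S → V)) = edgeLift M := by
  apply Set.Subset.antisymm
  · rintro e ⟨heN, e', rfl⟩
    -- show `e' ∈ M`
    suffices h : e' ∈ M by exact ⟨e', h, rfl⟩
    have hunion : IsInducedMatching (G.induce S) (M ∪ {e'}) := by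
      constructor
      · rintro f (hf | hf)
        · exact hM.1.1 hf
        · rw [Set.mem_singleton_iff] at hf
          subst hf
          induction f with
          | _ a b =>
            have := hN.1 heN
            rw [Sym2.map_pair_eq, SimpleGraph.mem_edgeSet] at this
            rw [SimpleGraph.mem_edgeSet, SimpleGraph.comap_adj]
            exact this
      · have key : ∀ p ∈ M, ∀ a ∈ p, ∀ b ∈ e', p ≠ e' →
            a ≠ b ∧ ¬ (G.induce S).Adj a b := by
          intro p hp a ha b hb hpe
          have hlp : Sym2.map Subtype.val p ∈ N := hsub ⟨p, hp, rfl⟩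
          have hne : Sym2.map (Subtype.val : S → V) p ≠ Sym2.map Subtype.val e' :=
            fun h => hpe (Sym2.map.injective Subtype.val_injective h)
          have := hN.2 _ hlp _ heN hne a.val (Sym2.mem_map.mpr ⟨a, ha, rfl⟩)
            b.val (Sym2.mem_map.mpr ⟨b, hb, rfl⟩)
          exact ⟨fun h => this.1 (congrArg Subtype.val h), fun h => this.2 h⟩
        rintro p (hp | hp) q (hq | hq) hpq a ha b hb
        · exact hM.1.2 p hp q hq hpq a ha b hb
        · rw [Set.mem_singleton_iff] at hq; subst hq
          exact key p hp a ha b hb hpq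
        · rw [Set.mem_singleton_iff] at hp; subst hp
          have := key q hq b hb a ha (Ne.symm hpq)
          exact ⟨this.1.symm, fun h => this.2 h.symm⟩
        · rw [Set.mem_singleton_iff] at hp hq; subst hp; subst hq
          exact absurd rfl hpq
    have := hM.2 _ hunion (Set.subset_union_left)
    rw [← this]
    exact Or.inr rfl
  · rintro e ⟨e', he', rfl⟩
    exact ⟨hsub ⟨e', he', rfl⟩, e', rfl⟩

end Aux

theorem mim_induce_le {V : Type*} [Fintype V] (G : SimpleGraph V) (S : Set V) :
    mim (G.induce S) ≤ mim G := by
  classical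
  unfold mim
  have hex : ∀ M : Set (Sym2 S), IsMaximalInducedMatching (G.induce S) M →
      ∃ N, IsMaximalInducedMatching G N ∧ edgeLift M ⊆ N := by
    intro M hM
    exact exists_maximal_extension G (edgeLift_isInducedMatching G hM.1)
  set F : Set (Sym2 S) → Set (Sym2 V) := fun M =>
    if h : ∃ N, IsMaximalInducedMatching G N ∧ edgeLift M ⊆ N then h.choose else ∅ with hF
  have hFspec : ∀ M, IsMaximalInducedMatching (G.induce S) M →
      IsMaximalInducedMatching G (F M) ∧ edgeLift M ⊆ F M := by
    intro M hM
    have h := hex M hM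
    simp only [hF, dif_pos h]
    exact h.choose_spec
  apply Set.ncard_le_ncard_of_injOn F
  · intro M hM
    exact (hFspec M hM).1
  · intro M1 h1 M2 h2 heq
    have r1 := recover G h1 (hFspec M1 h1).1.1 (hFspec M1 h1).2
    have r2 := recover G h2 (hFspec M2 h2).1.1 (hFspec M2 h2).2
    rw [heq] at r1
    exact edgeLift_injective (r1.symm.trans r2)
end

section
/- Let G be a graph and v a vertex of G. Then |M_G| ≤ |M_{G-v}| + Σ_{p ∈ N(v)} |M_{G - N[v] ∪ N[p]}|, where for a graph with no edges the count of maximal induced matchings is taken to be 1. -/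
open SimpleGraph

section Aux

variable {V : Type*} {G : SimpleGraph V} {s : Set V}

lemma aux_edge_lift {e : Sym2 V} (h : ∀ a ∈ e, a ∈ s) :
    ∃ e1 : Sym2 s, Sym2.map Subtype.val e1 = e := by
  induction e using Sym2.ind with
  | _ a b => exact ⟨s(⟨a, h a (by simp)⟩, ⟨b, h b (by simp)⟩), by simp⟩

lemma aux_edgeSet_map {e1 : Sym2 s} :
    e1 ∈ (G.induce s).edgeSet ↔ Sym2.map Subtype.val e1 ∈ G.edgeSet := by
  induction e1 using Sym2.ind with
  | _ a b => simp [comap_adj]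

lemma aux_image {M' : Set (Sym2 s)} (hM' : IsInducedMatching (G.induce s) M') :
    IsInducedMatching G (Sym2.map Subtype.val '' M') := by
  obtain ⟨h1, h2⟩ := hM'
  constructor
  · rintro e ⟨e1, he1, rfl⟩
    exact aux_edgeSet_map.1 (h1 he1)
  · rintro e ⟨e1, he1, rfl⟩ f ⟨f', hf', rfl⟩ hef a ha b hb
    rw [Sym2.mem_map] at ha hb
    obtain ⟨a', ha', rfl⟩ := ha
    obtain ⟨b', hb', rfl⟩ := hb
    have hne : e1 ≠ f' := fun h => hef (by rw [h])
    obtain ⟨hab, hadj⟩ := h2 e1 he1 f' hf' hne a' ha' b' hb'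
    refine ⟨fun h => hab (Subtype.ext h), fun h => hadj ?_⟩
    simpa [comap_adj] using h

lemma key {E M : Set (Sym2 V)}
    (hE : IsInducedMatching G E)
    (hsep : ∀ a ∈ s, ∀ e ∈ E, ∀ b ∈ e, a ≠ b ∧ ¬ G.Adj a b)
    (hM : IsMaximalInducedMatching G M) (hEM : E ⊆ M)
    (hM0 : ∀ e ∈ M, e ∉ E → ∀ a ∈ e, a ∈ s) :
    IsMaximalInducedMatching (G.induce s) (Sym2.map (Subtype.val : s → V) ⁻¹' M) ∧
      M = Sym2.map (Subtype.val : s → V) '' (Sym2.map (Subtype.val : s → V) ⁻¹' M) ∪ E := by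
  obtain ⟨⟨hsub, hind⟩, hmax⟩ := hM
  have hinj : Function.Injective (Sym2.map (Subtype.val : s → V)) :=
    Sym2.map.injective Subtype.val_injective
  have hpre : IsInducedMatching (G.induce s) (Sym2.map Subtype.val ⁻¹' M) := by
    constructor
    · intro e1 he1
      exact aux_edgeSet_map.2 (hsub he1)
    · intro e1 he1 f' hf' hne a ha b hb
      have hne' : Sym2.map Subtype.val e1 ≠ Sym2.map Subtype.val f' := fun h => hne (hinj h)
      obtain ⟨hab, hadj⟩ := hind _ he1 _ hf' hne' a.val (Sym2.mem_map.2 ⟨a, ha, rfl⟩)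
        b.val (Sym2.mem_map.2 ⟨b, hb, rfl⟩)
      refine ⟨fun h => hab (congrArg Subtype.val h), fun h => hadj ?_⟩
      simpa [comap_adj] using h
  have hMsub : M ⊆ Sym2.map (Subtype.val : s → V) '' (Sym2.map (Subtype.val : s → V) ⁻¹' M) ∪ E := by
    intro e he
    by_cases heE : e ∈ E
    · exact Or.inr heE
    · obtain ⟨e1, he1⟩ := aux_edge_lift (hM0 e he heE)
      exact Or.inl ⟨e1, by rw [Set.mem_preimage, he1]; exact he, he1⟩
  have heq : M = Sym2.map (Subtype.val : s → V) '' (Sym2.map (Subtype.val : s → V) ⁻¹' M) ∪ E := by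
    refine Set.Subset.antisymm hMsub (Set.union_subset ?_ hEM)
    exact (Set.image_preimage_subset _ _)
  refine ⟨⟨hpre, ?_⟩, heq⟩
  intro M' hM' hsubM'
  -- L := image of M' together with E is an induced matching of G containing M
  set L : Set (Sym2 V) := Sym2.map Subtype.val '' M' ∪ E with hL
  have himg := aux_image hM'
  have hLind : IsInducedMatching G L := by
    constructor
    · exact Set.union_subset himg.1 hE.1
    · rintro e (he | he) f (hf | hf) hef a ha b hb
      · exact himg.2 e he f hf hef a ha b hb
      · obtain ⟨e1, he1, rfl⟩ := he
        rw [Sym2.mem_map] at ha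
        obtain ⟨a', ha', rfl⟩ := ha
        exact hsep a'.val a'.property f hf b hb
      · obtain ⟨f', hf', rfl⟩ := hf
        rw [Sym2.mem_map] at hb
        obtain ⟨b', hb', rfl⟩ := hb
        obtain ⟨h1, h2⟩ := hsep b'.val b'.property e he a ha
        exact ⟨h1.symm, fun h => h2 h.symm⟩
      · exact hE.2 e he f hf hef a ha b hb
  have hML : M ⊆ L := by
    intro e he
    by_cases heE : e ∈ E
    · exact Or.inr heE
    · obtain ⟨e1, he1⟩ := aux_edge_lift (hM0 e he heE)
      exact Or.inl ⟨e1, hsubM' (by rw [Set.mem_preimage, he1]; exact he), he1⟩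
  have hLM : L = M := hmax L hLind hML
  refine Set.Subset.antisymm ?_ hsubM'
  intro e1 he1
  have : Sym2.map Subtype.val e1 ∈ L := Or.inl ⟨e1, he1, rfl⟩
  rw [hLM] at this
  exact this

lemma key_count [Finite V] {E : Set (Sym2 V)}
    (hE : IsInducedMatching G E)
    (hsep : ∀ a ∈ s, ∀ e ∈ E, ∀ b ∈ e, a ≠ b ∧ ¬ G.Adj a b) :
    {M | IsMaximalInducedMatching G M ∧ E ⊆ M ∧
        ∀ e ∈ M, e ∉ E → ∀ a ∈ e, a ∈ s}.ncard ≤ mim (G.induce s) := by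
  apply Set.ncard_le_ncard_of_injOn (fun M => Sym2.map (Subtype.val : s → V) ⁻¹' M)
  · intro M hM
    exact (key hE hsep hM.1 hM.2.1 hM.2.2).1
  · intro M1 h1 M2 h2 h
    simp only at h
    rw [(key hE hsep h1.1 h1.2.1 h1.2.2).2, (key hE hsep h2.1 h2.2.1 h2.2.2).2, h]

lemma aux_ncard_biUnion_le {α ι : Type*} [Finite α] [DecidableEq ι] (t : Finset ι)
    (f : ι → Set α) : (⋃ p ∈ t, f p).ncard ≤ ∑ p ∈ t, (f p).ncard := by
  induction t using Finset.induction with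
  | empty => simp
  | insert _ _ h ih =>
      rename_i a t'
      rw [Finset.sum_insert h, Finset.set_biUnion_insert]
      exact le_trans (Set.ncard_union_le _ _) (by omega)

end Aux

theorem mim_le_deleteVertex_add_sum {V : Type*} [Fintype V] [DecidableEq V]
    (G : SimpleGraph V) [DecidableRel G.Adj] (v : V) :
    mim G ≤ mim (G.induce {u | u ≠ v}) +
      ∑ p ∈ G.neighborFinset v,
        mim (G.induce ((insert v (G.neighborSet v) ∪ insert p (G.neighborSet p))ᶜ)) := by
  classical
  have hT0 : {M : Set (Sym2 V) | IsMaximalInducedMatching G M ∧ (∅ : Set (Sym2 V)) ⊆ M ∧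
      ∀ e ∈ M, e ∉ (∅ : Set (Sym2 V)) → ∀ a ∈ e, a ∈ {u | u ≠ v}}.ncard
      ≤ mim (G.induce {u | u ≠ v}) := by
    apply key_count
    · exact ⟨Set.empty_subset _, by simp⟩
    · intro a _ e he
      exact absurd he (Set.notMem_empty e)
  have hTp : ∀ p ∈ G.neighborFinset v,
      {M : Set (Sym2 V) | IsMaximalInducedMatching G M ∧ ({s(v,p)} : Set (Sym2 V)) ⊆ M ∧
        ∀ e ∈ M, e ∉ ({s(v,p)} : Set (Sym2 V)) → ∀ a ∈ e,
          a ∈ ((insert v (G.neighborSet v) ∪ insert p (G.neighborSet p))ᶜ : Set V)}.ncard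
      ≤ mim (G.induce ((insert v (G.neighborSet v) ∪ insert p (G.neighborSet p))ᶜ)) := by
    intro p hp
    have hadj : G.Adj v p := by rwa [G.mem_neighborFinset] at hp
    apply key_count
    · constructor
      · rw [Set.singleton_subset_iff]
        exact hadj
      · intro e he f hf hef
        rw [Set.mem_singleton_iff] at he hf
        exact absurd (he.trans hf.symm) hef
    · intro a ha e he b hb
      rw [Set.mem_singleton_iff] at he
      subst he
      simp only [Set.mem_compl_iff, Set.mem_union, Set.mem_insert_iff,
        mem_neighborSet, not_or] at ha
      obtain ⟨⟨hav, hadjv⟩, ⟨hap, hadjp⟩⟩ := ha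
      rcases Sym2.mem_iff.1 hb with rfl | rfl
      · exact ⟨hav, fun h => hadjv h.symm⟩
      · exact ⟨hap, fun h => hadjp h.symm⟩
  have hcover : {M : Set (Sym2 V) | IsMaximalInducedMatching G M} ⊆
      {M : Set (Sym2 V) | IsMaximalInducedMatching G M ∧ (∅ : Set (Sym2 V)) ⊆ M ∧
        ∀ e ∈ M, e ∉ (∅ : Set (Sym2 V)) → ∀ a ∈ e, a ∈ {u | u ≠ v}} ∪
      ⋃ p ∈ G.neighborFinset v,
        {M : Set (Sym2 V) | IsMaximalInducedMatching G M ∧ ({s(v,p)} : Set (Sym2 V)) ⊆ M ∧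
          ∀ e ∈ M, e ∉ ({s(v,p)} : Set (Sym2 V)) → ∀ a ∈ e,
            a ∈ ((insert v (G.neighborSet v) ∪ insert p (G.neighborSet p))ᶜ : Set V)} := by
    intro M hM
    by_cases hv : ∃ e ∈ M, v ∈ e
    · obtain ⟨e, he, hve⟩ := hv
      obtain ⟨p, rfl⟩ : ∃ p, e = s(v, p) := by
        induction e using Sym2.ind with
        | _ x y =>
          rcases Sym2.mem_iff.1 hve with rfl | rfl
          · exact ⟨y, rfl⟩
          · exact ⟨x, Sym2.eq_swap.symm⟩
      have hadj : G.Adj v p := hM.1.1 he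
      refine Or.inr (Set.mem_biUnion ((G.mem_neighborFinset v p).2 hadj) ?_)
      refine ⟨hM, Set.singleton_subset_iff.2 he, ?_⟩
      intro e' he' hne a ha
      have hne' : e' ≠ s(v, p) := fun h => hne (Set.mem_singleton_iff.2 h)
      have h1 := hM.1.2 e' he' s(v, p) he hne' a ha v (Sym2.mem_iff.2 (Or.inl rfl))
      have h2 := hM.1.2 e' he' s(v, p) he hne' a ha p (Sym2.mem_iff.2 (Or.inr rfl))
      simp only [Set.mem_compl_iff, Set.mem_union, Set.mem_insert_iff,
        mem_neighborSet, not_or]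
      exact ⟨⟨h1.1, fun h => h1.2 h.symm⟩, ⟨h2.1, fun h => h2.2 h.symm⟩⟩
    · refine Or.inl ⟨hM, Set.empty_subset _, ?_⟩
      intro e he _ a ha
      intro hav
      exact hv ⟨e, he, hav ▸ ha⟩
  calc mim G = {M : Set (Sym2 V) | IsMaximalInducedMatching G M}.ncard := rfl
    _ ≤ _ := Set.ncard_le_ncard hcover (Set.toFinite _)
    _ ≤ _ + _ := Set.ncard_union_le _ _
    _ ≤ _ := add_le_add hT0 (le_trans (aux_ncard_biUnion_le _ _) (Finset.sum_le_sum hTp))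
end

section
/- Let G be a graph and v a vertex of G. Then |M_G| ≥ |M_{G-v}|, where M_G denotes the set of maximal induced matchings. -/
open SimpleGraph

/-!
Send a maximal induced matching `M` of `H ↪g G` to a maximal induced matching `N ⊇ f(M)` of `G`.
The edges of `N` lying in the image of `f` pull back to an induced matching of `H` containing `M`,
so by maximality they are exactly `f(M)`; hence `M` can be read off from `N`.
-/

namespace SimpleGraph

variable {V W : Type*} {G : SimpleGraph V} {H : SimpleGraph W}

lemma IsInducedMatching.mono {M N : Set (Sym2 V)} (hN : IsInducedMatching G N) (hMN : M ⊆ N) :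
    IsInducedMatching G M :=
  ⟨hMN.trans hN.1, fun e he f hf => hN.2 e (hMN he) f (hMN hf)⟩

lemma IsInducedMatching.exists_isMaximalInducedMatching_superset [Finite V] {M : Set (Sym2 V)}
    (hM : IsInducedMatching G M) : ∃ N, M ⊆ N ∧ IsMaximalInducedMatching G N := by
  obtain ⟨N, hMN, hN⟩ := Finite.exists_le_maximal (p := IsInducedMatching G) hM
  exact ⟨N, hMN, hN.prop, fun N' hN' hNN' => (hN.le_of_ge hN' hNN').antisymm hNN'⟩

lemma Embedding.isInducedMatching_image_iff (f : H ↪g G) {M : Set (Sym2 W)} :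
    IsInducedMatching G (Sym2.map f '' M) ↔ IsInducedMatching H M := by
  simp only [IsInducedMatching, Set.forall_mem_image, Sym2.mem_map,
    forall_exists_index, and_imp, forall_apply_eq_imp_iff₂, (Sym2.map.injective f.injective).ne_iff,
    f.injective.ne_iff, f.map_adj_iff, Set.subset_def, f.map_mem_edgeSet_iff]

lemma IsMaximalInducedMatching.inter_range_eq_image (f : H ↪g G) {M : Set (Sym2 W)}
    (hM : IsMaximalInducedMatching H M) {N : Set (Sym2 V)} (hN : IsInducedMatching G N)
    (hMN : Sym2.map f '' M ⊆ N) : N ∩ Set.range (Sym2.map f) = Sym2.map f '' M := by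
  obtain ⟨M', hM'⟩ := Set.subset_range_iff_exists_image_eq.1 (Set.inter_subset_right (s := N))
  have hM'ind : IsInducedMatching H M' :=
    f.isInducedMatching_image_iff.1 (hM' ▸ hN.mono Set.inter_subset_left)
  have hMM' : M ⊆ M' := by
    rw [← Set.image_subset_image_iff (Sym2.map.injective f.injective), hM']
    exact Set.subset_inter hMN (Set.image_subset_range _ _)
  rw [← hM', hM.2 M' hM'ind hMM']

theorem Embedding.mim_le [Finite V] (f : H ↪g G) : mim H ≤ mim G := by
  have hsub : Set.image (Sym2.map f) '' {M | IsMaximalInducedMatching H M} ⊆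
      (· ∩ Set.range (Sym2.map f)) '' {N | IsMaximalInducedMatching G N} := by
    rintro _ ⟨M, hM, rfl⟩
    obtain ⟨N, hMN, hN⟩ :=
      (f.isInducedMatching_image_iff.2 hM.1).exists_isMaximalInducedMatching_superset
    exact ⟨N, hN, hM.inter_range_eq_image f hN.1 hMN⟩
  calc mim H = (Set.image (Sym2.map f) '' {M | IsMaximalInducedMatching H M}).ncard :=
        (Set.ncard_image_of_injective _ (Set.image_injective.2
          (Sym2.map.injective f.injective))).symm
    _ ≤ _ := Set.ncard_le_ncard hsub
    _ ≤ mim G := Set.ncard_image_le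

end SimpleGraph

theorem mim_deleteVertex_le {V : Type*} [Fintype V] (G : SimpleGraph V) (v : V) :
    mim (G.induce {u | u ≠ v}) ≤ mim G :=
  (Embedding.induce _).mim_le
end

section
/- Let G be a graph containing a pendant block isomorphic to K_r with r ≥ 3, with cutpoint v (i.e., the r-1 vertices of the block other than v have all their neighbors inside the block). Then the number of maximal induced matchings of G equals binom(r-1, 2) · |M_{G - K_r}| + Σ_{p ∈ N(v)} |M_{G - N[v] ∪ N[p]}|, where G - K_r denotes G with all r vertices of the block deleted. -/
open SimpleGraph

namespace MIMPB

variable {V : Type*}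

def up (S : Set V) (M : Set (Sym2 ↥S)) : Set (Sym2 V) := Sym2.map Subtype.val '' M

def down (S : Set V) (M : Set (Sym2 V)) : Set (Sym2 ↥S) :=
  {z | Sym2.map Subtype.val z ∈ M}

lemma map_val_inj {S : Set V} : Function.Injective (Sym2.map (Subtype.val : S → V)) :=
  Sym2.map.injective Subtype.val_injective

lemma up_injective (S : Set V) : Function.Injective (up S) :=
  fun _ _ h => (Set.image_injective.2 map_val_inj) h

lemma mem_up_endpoints {S : Set V} {M : Set (Sym2 ↥S)} {z : Sym2 V}
    (hz : z ∈ up S M) : ∀ x ∈ z, x ∈ S := by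
  obtain ⟨z', _, rfl⟩ := hz
  intro x hx
  obtain ⟨a, _, rfl⟩ := (Sym2.mem_map).1 hx
  exact a.2

lemma up_down_eq {S : Set V} {M : Set (Sym2 V)}
    (h : ∀ z ∈ M, ∀ x ∈ z, x ∈ S) : up S (down S M) = M := by
  ext z
  constructor
  · rintro ⟨z', hz', rfl⟩; exact hz'
  · intro hz
    induction z using Sym2.ind with
    | _ x y =>
      refine ⟨s(⟨x, h _ hz x (by simp)⟩, ⟨y, h _ hz y (by simp)⟩), ?_, by simp⟩
      simpa [down] using hz

lemma im_mono {G : SimpleGraph V} {M N : Set (Sym2 V)}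
    (h : IsInducedMatching G M) (hNM : N ⊆ M) : IsInducedMatching G N :=
  ⟨hNM.trans h.1, fun e he f hf => h.2 e (hNM he) f (hNM hf)⟩

lemma up_im {G : SimpleGraph V} {S : Set V} {M : Set (Sym2 ↥S)}
    (h : IsInducedMatching (G.induce S) M) : IsInducedMatching G (up S M) := by
  obtain ⟨hsub, hpair⟩ := h
  constructor
  · rintro z ⟨z', hz', rfl⟩
    have := hsub hz'
    induction z' using Sym2.ind with
    | _ x y => simpa using this
  · rintro e ⟨e', he', rfl⟩ f ⟨f', hf', rfl⟩ hne a ha b hb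
    obtain ⟨a', ha', rfl⟩ := Sym2.mem_map.1 ha
    obtain ⟨b', hb', rfl⟩ := Sym2.mem_map.1 hb
    have hne' : e' ≠ f' := fun h => hne (by rw [h])
    have := hpair e' he' f' hf' hne' a' ha' b' hb'
    exact ⟨fun h => this.1 (Subtype.ext h), fun h => this.2 h⟩

lemma down_im {G : SimpleGraph V} {S : Set V} {M : Set (Sym2 V)}
    (h : IsInducedMatching G M) :
    IsInducedMatching (G.induce S) (down S M) := by
  obtain ⟨hsub, hpair⟩ := h
  constructor
  · intro z hz
    induction z using Sym2.ind with
    | _ x y => simpa using hsub hz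
  · intro e he f hf hne a ha b hb
    have hne' : Sym2.map Subtype.val e ≠ Sym2.map Subtype.val f :=
      fun h => hne (map_val_inj h)
    have := hpair _ he _ hf hne' a.val (Sym2.mem_map.2 ⟨a, ha, rfl⟩)
      b.val (Sym2.mem_map.2 ⟨b, hb, rfl⟩)
    exact ⟨fun h => this.1 (by rw [h]), this.2⟩

lemma fiber_eq {G : SimpleGraph V} {a b : V} (hab : G.Adj a b) :
    {M : Set (Sym2 V) | IsMaximalInducedMatching G M ∧ s(a, b) ∈ M}.ncard
      = mim (G.induce ((insert a (G.neighborSet a) ∪ insert b (G.neighborSet b))ᶜ)) := by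
  set S : Set V := (insert a (G.neighborSet a) ∪ insert b (G.neighborSet b))ᶜ with hSdef
  have hmemS : ∀ c, c ∈ S ↔ (c ≠ a ∧ ¬ G.Adj a c) ∧ (c ≠ b ∧ ¬ G.Adj b c) := by
    intro c
    simp only [hSdef, Set.mem_compl_iff, Set.mem_union, Set.mem_insert_iff, SimpleGraph.mem_neighborSet, not_or]
  have haS : a ∉ S := fun h => ((hmemS a).1 h).1.1 rfl
  have hbS : b ∉ S := fun h => ((hmemS b).1 h).2.1 rfl
  set f : Set (Sym2 ↥S) → Set (Sym2 V) := fun M' => insert s(a, b) (up S M') with hfdef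
  have hnotup : ∀ (N : Set (Sym2 V)), (∀ z ∈ N, ∀ x ∈ z, x ∈ S) → s(a, b) ∉ N :=
    fun N hN h => haS (hN _ h a (by simp))
  have havoid : ∀ (M : Set (Sym2 V)), IsInducedMatching G M → s(a, b) ∈ M →
      ∀ z ∈ M \ {s(a, b)}, ∀ c ∈ z, c ∈ S := by
    rintro M hM he z ⟨hz, hzne⟩ c hc
    have hne : z ≠ s(a, b) := hzne
    have h1 := hM.2 z hz _ he hne c hc a (by simp)
    have h2 := hM.2 z hz _ he hne c hc b (by simp)
    exact (hmemS c).2 ⟨⟨h1.1, fun h => h1.2 h.symm⟩, ⟨h2.1, fun h => h2.2 h.symm⟩⟩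
  have hup_ins : ∀ (N : Set (Sym2 V)), IsInducedMatching G N → (∀ z ∈ N, ∀ x ∈ z, x ∈ S) →
      IsInducedMatching G (insert s(a, b) N) := by
    intro N hN hNS
    constructor
    · rintro z (rfl | hz)
      · exact hab
      · exact hN.1 hz
    · rintro e (rfl | he) g (rfl | hg) hne c hc d hd
      · exact absurd rfl hne
      · have hdS : d ∈ S := hNS _ hg d hd
        have hd' := (hmemS d).1 hdS
        rcases Sym2.mem_iff.1 hc with rfl | rfl
        · exact ⟨fun h => hd'.1.1 h.symm, fun h => hd'.1.2 h⟩
        · exact ⟨fun h => hd'.2.1 h.symm, fun h => hd'.2.2 h⟩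
      · have hcS : c ∈ S := hNS _ he c hc
        have hc' := (hmemS c).1 hcS
        rcases Sym2.mem_iff.1 hd with rfl | rfl
        · exact ⟨hc'.1.1, fun h => hc'.1.2 h.symm⟩
        · exact ⟨hc'.2.1, fun h => hc'.2.2 h.symm⟩
      · exact hN.2 e he g hg hne c hc d hd
  have hinj : Set.InjOn f {M' | IsMaximalInducedMatching (G.induce S) M'} := by
    intro M1 _ M2 _ h
    have h1 : s(a, b) ∉ up S M1 := hnotup _ (fun z hz => mem_up_endpoints hz)
    have h2 : s(a, b) ∉ up S M2 := hnotup _ (fun z hz => mem_up_endpoints hz)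
    apply up_injective S
    have : insert s(a, b) (up S M1) \ {s(a, b)} = insert s(a, b) (up S M2) \ {s(a, b)} := by
      rw [show insert s(a,b) (up S M1) = insert s(a,b) (up S M2) from h]
    rwa [Set.insert_diff_self_of_notMem h1, Set.insert_diff_self_of_notMem h2] at this
  have himage : f '' {M' | IsMaximalInducedMatching (G.induce S) M'}
      = {M : Set (Sym2 V) | IsMaximalInducedMatching G M ∧ s(a, b) ∈ M} := by
    ext M
    constructor
    · rintro ⟨M', hM', rfl⟩
      refine ⟨⟨hup_ins _ (up_im hM'.1) (fun z hz => mem_up_endpoints hz), ?_⟩,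
        Set.mem_insert _ _⟩
      intro M₂ hM₂ hsub
      have heM₂ : s(a, b) ∈ M₂ := hsub (Set.mem_insert _ _)
      have hAv : ∀ z ∈ M₂ \ {s(a, b)}, ∀ x ∈ z, x ∈ S := havoid M₂ hM₂ heM₂
      have hupdown : up S (down S (M₂ \ {s(a, b)})) = M₂ \ {s(a, b)} := up_down_eq hAv
      have hdownIM : IsInducedMatching (G.induce S) (down S (M₂ \ {s(a, b)})) :=
        down_im (im_mono hM₂ Set.diff_subset)
      have hsub' : M' ⊆ down S (M₂ \ {s(a, b)}) := by
        intro z hz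
        have hmem : Sym2.map Subtype.val z ∈ M₂ :=
          hsub (Set.mem_insert_of_mem _ ⟨z, hz, rfl⟩)
        have hne : Sym2.map Subtype.val z ≠ s(a, b) := by
          intro h
          exact haS (mem_up_endpoints (M := M') ⟨z, hz, rfl⟩ a (by rw [h]; simp))
        exact ⟨hmem, hne⟩
      have hM'eq := hM'.2 _ hdownIM hsub'
      have : M₂ \ {s(a, b)} = up S M' := by rw [← hM'eq, hupdown]
      calc M₂ = insert s(a, b) (M₂ \ {s(a, b)}) := by
                rw [Set.insert_diff_singleton, Set.insert_eq_self.2 heM₂]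
        _ = insert s(a, b) (up S M') := by rw [this]
    · rintro ⟨⟨hM, hmax⟩, heM⟩
      set M' := down S (M \ {s(a, b)}) with hM'def
      have hAv : ∀ z ∈ M \ {s(a, b)}, ∀ x ∈ z, x ∈ S := havoid M hM heM
      have hupdown : up S M' = M \ {s(a, b)} := up_down_eq hAv
      have hM'im : IsInducedMatching (G.induce S) M' := down_im (im_mono hM Set.diff_subset)
      refine ⟨M', ⟨hM'im, ?_⟩, ?_⟩
      · intro M'' hM'' hsub
        have h2 : IsInducedMatching G (insert s(a, b) (up S M'')) :=
          hup_ins _ (up_im hM'') (fun z hz => mem_up_endpoints hz)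
        have h3 : M ⊆ insert s(a, b) (up S M'') := by
          intro z hz
          by_cases hze : z = s(a, b)
          · exact hze ▸ Set.mem_insert _ _
          · have : z ∈ up S M' := hupdown ▸ ⟨hz, hze⟩
            obtain ⟨z', hz', rfl⟩ := this
            exact Set.mem_insert_of_mem _ ⟨z', hsub hz', rfl⟩
        have h4 := hmax _ h2 h3
        have h5 : up S M'' = M \ {s(a, b)} := by
          rw [← h4, Set.insert_diff_self_of_notMem
            (hnotup _ (fun z hz => mem_up_endpoints hz))]
        exact up_injective S (by rw [h5, hupdown])
      · show insert s(a, b) (up S M') = M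
        rw [hupdown, Set.insert_diff_singleton, Set.insert_eq_self.2 heM]
  rw [← himage, Set.ncard_image_of_injOn hinj]
  rfl

end MIMPB

theorem mim_pendant_block {V : Type*} [Fintype V] [DecidableEq V]
    (G : SimpleGraph V) [DecidableRel G.Adj] (r : ℕ) (hr : 3 ≤ r)
    (B : Finset V) (hBcard : B.card = r) (v : V) (hv : v ∈ B)
    (hcomplete : ∀ a ∈ B, ∀ b ∈ B, a ≠ b → G.Adj a b)
    (hpendant : ∀ a ∈ B, a ≠ v → ∀ w, G.Adj a w → w ∈ B) :
    mim G = (r - 1).choose 2 * mim (G.induce ((↑B : Set V)ᶜ)) +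
      ∑ p ∈ G.neighborFinset v,
        mim (G.induce ((insert v (G.neighborSet v) ∪ insert p (G.neighborSet p))ᶜ)) := by
  classical
  have hNa : ∀ a ∈ B, a ≠ v → insert a (G.neighborSet a) = (↑B : Set V) := by
    intro a haB hav
    ext x
    simp only [Set.mem_insert_iff, mem_neighborSet, Finset.mem_coe]
    constructor
    · rintro (rfl | h)
      · exact haB
      · exact hpendant a haB hav x h
    · intro hx
      by_cases hxa : x = a
      · exact Or.inl hxa
      · exact Or.inr (hcomplete a haB x hx (fun h => hxa h.symm))
  set EBi : Finset (Sym2 V) := (B.erase v).offDiag.image Sym2.mk.uncurry with hEBi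
  set EBv : Finset (Sym2 V) := (G.neighborFinset v).image (fun p => s(v, p)) with hEBv
  have hdisjEB : Disjoint EBi EBv := by
    rw [Finset.disjoint_left]
    rintro e hei hev
    obtain ⟨⟨x, y⟩, hxy, rfl⟩ := Finset.mem_image.1 hei
    obtain ⟨p, hp, hpe⟩ := Finset.mem_image.1 hev
    have hvmem : v ∈ s(x, y) := (show s(v, p) = s(x, y) from hpe) ▸ (by simp)
    obtain ⟨hx, hy, -⟩ := Finset.mem_offDiag.1 hxy
    rcases Sym2.mem_iff.1 hvmem with rfl | rfl
    · exact (Finset.mem_erase.1 hx).1 rfl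
    · exact (Finset.mem_erase.1 hy).1 rfl
  have hBig : 1 < (B.erase v).card := by
    rw [Finset.card_erase_of_mem hv, hBcard]; omega
  have hmeet : ∀ M : Set (Sym2 V), IsMaximalInducedMatching G M →
      ∃ e ∈ M, ∃ c ∈ e, c ∈ B := by
    intro M hM
    by_contra hno
    push_neg at hno
    obtain ⟨x, hx, y, hy, hxy⟩ := Finset.one_lt_card.1 hBig
    have hxB := (Finset.mem_erase.1 hx).2
    have hxv := (Finset.mem_erase.1 hx).1
    have hyB := (Finset.mem_erase.1 hy).2
    have hyv := (Finset.mem_erase.1 hy).1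
    have hadj : G.Adj x y := hcomplete x hxB y hyB hxy
    have hins : IsInducedMatching G (insert s(x, y) M) := by
      constructor
      · rintro z (rfl | hz)
        · exact hadj
        · exact hM.1.1 hz
      · rintro e (rfl | he) f (rfl | hf) hne c hc d hd
        · exact absurd rfl hne
        · have hcB : c ∈ B := by
            rcases Sym2.mem_iff.1 hc with rfl | rfl
            exacts [hxB, hyB]
          have hcv : c ≠ v := by
            rcases Sym2.mem_iff.1 hc with rfl | rfl
            exacts [hxv, hyv]
          have hdB : d ∉ B := hno f hf d hd
          exact ⟨fun h => hdB (h ▸ hcB), fun h => hdB (hpendant c hcB hcv d h)⟩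
        · have hdB : d ∈ B := by
            rcases Sym2.mem_iff.1 hd with rfl | rfl
            exacts [hxB, hyB]
          have hdv : d ≠ v := by
            rcases Sym2.mem_iff.1 hd with rfl | rfl
            exacts [hxv, hyv]
          have hcB : c ∉ B := hno e he c hc
          exact ⟨fun h => hcB (h ▸ hdB), fun h => hcB (hpendant d hdB hdv c h.symm)⟩
        · exact hM.1.2 e he f hf hne c hc d hd
    have heq := hM.2 _ hins (Set.subset_insert _ _)
    have hmem : s(x, y) ∈ M := heq ▸ Set.mem_insert _ _
    exact hno _ hmem x (by simp) hxB
  have huniq : ∀ M : Set (Sym2 V), IsInducedMatching G M → ∀ e ∈ M, ∀ f ∈ M,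
      (∃ c ∈ e, c ∈ B) → (∃ c ∈ f, c ∈ B) → e = f := by
    intro M hM e he f hf h1 h2
    obtain ⟨c, hc, hcB⟩ := h1
    obtain ⟨d, hd, hdB⟩ := h2
    by_contra hne
    have := hM.2 e he f hf hne c hc d hd
    rcases eq_or_ne c d with rfl | hcd
    · exact this.1 rfl
    · exact this.2 (hcomplete c hcB d hdB hcd)
  have hclass : ∀ M : Set (Sym2 V), IsInducedMatching G M → ∀ e ∈ M, (∃ c ∈ e, c ∈ B) →
      e ∈ EBi ∪ EBv := by
    intro M hM e he hc
    obtain ⟨c, hce, hcB⟩ := hc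
    obtain ⟨d, rfl⟩ := Sym2.mem_iff_exists.1 hce
    have hadj : G.Adj c d := hM.1 he
    rcases eq_or_ne c v with rfl | hcv
    · exact Finset.mem_union_right _
        (Finset.mem_image.2 ⟨d, (mem_neighborFinset _ _ _).2 hadj, rfl⟩)
    · have hdB : d ∈ B := hpendant c hcB hcv d hadj
      rcases eq_or_ne d v with rfl | hdv
      · exact Finset.mem_union_right _
          (Finset.mem_image.2 ⟨c, (mem_neighborFinset _ _ _).2 hadj.symm, Sym2.eq_swap⟩)
      · refine Finset.mem_union_left _ (Finset.mem_image.2 ⟨(c, d), ?_, rfl⟩)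
        exact Finset.mem_offDiag.2
          ⟨Finset.mem_erase.2 ⟨hcv, hcB⟩, Finset.mem_erase.2 ⟨hdv, hdB⟩, hadj.ne⟩
  have hEBmem : ∀ e ∈ EBi ∪ EBv, ∃ c ∈ e, c ∈ B := by
    intro e he
    rcases Finset.mem_union.1 he with he | he
    · obtain ⟨⟨x, y⟩, hxy, rfl⟩ := Finset.mem_image.1 he
      exact ⟨x, by simp, (Finset.mem_erase.1 (Finset.mem_offDiag.1 hxy).1).2⟩
    · obtain ⟨p, hp, rfl⟩ := Finset.mem_image.1 he
      exact ⟨v, by simp, hv⟩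
  have hfin : ∀ s : Set (Set (Sym2 V)), s.Finite := fun s => Set.toFinite s
  have key : mim G = ∑ e ∈ EBi ∪ EBv,
      {M : Set (Sym2 V) | IsMaximalInducedMatching G M ∧ e ∈ M}.ncard := by
    show Set.ncard {M : Set (Sym2 V) | IsMaximalInducedMatching G M} = _
    rw [Set.ncard_eq_toFinset_card _ (hfin _)]
    have hset : (hfin {M : Set (Sym2 V) | IsMaximalInducedMatching G M}).toFinset =
        (EBi ∪ EBv).biUnion (fun e =>
          (hfin {M : Set (Sym2 V) | IsMaximalInducedMatching G M ∧ e ∈ M}).toFinset) := by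
      ext M
      simp only [Set.Finite.mem_toFinset, Finset.mem_biUnion, Set.mem_setOf_eq]
      constructor
      · intro hM
        obtain ⟨e, he, hc⟩ := hmeet M hM
        exact ⟨e, hclass M hM.1 e he hc, hM, he⟩
      · rintro ⟨e, _, hM, _⟩
        exact hM
    rw [hset, Finset.card_biUnion]
    · exact Finset.sum_congr rfl fun e _ => (Set.ncard_eq_toFinset_card _ (hfin _)).symm
    · intro e he f hf hne
      rw [Function.onFun, Finset.disjoint_left]
      intro M hMe hMf
      simp only [Set.Finite.mem_toFinset, Set.mem_setOf_eq] at hMe hMf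
      exact hne (huniq M hMe.1.1 e hMe.2 f hMf.2 (hEBmem e he) (hEBmem f hf))
  rw [key, Finset.sum_union hdisjEB]
  congr 1
  · have h1 : ∀ e ∈ EBi,
        {M : Set (Sym2 V) | IsMaximalInducedMatching G M ∧ e ∈ M}.ncard
          = mim (G.induce ((↑B : Set V)ᶜ)) := by
      intro e he
      obtain ⟨⟨x, y⟩, hxy, rfl⟩ := Finset.mem_image.1 he
      obtain ⟨hx, hy, hxy'⟩ := Finset.mem_offDiag.1 hxy
      have hxB := (Finset.mem_erase.1 hx).2
      have hyB := (Finset.mem_erase.1 hy).2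
      have hadj : G.Adj x y := hcomplete x hxB y hyB hxy'
      rw [show Function.uncurry Sym2.mk (x, y) = s(x, y) from rfl, MIMPB.fiber_eq hadj, hNa x hxB (Finset.mem_erase.1 hx).1,
        hNa y hyB (Finset.mem_erase.1 hy).1, Set.union_self]
    rw [Finset.sum_congr rfl h1, Finset.sum_const, smul_eq_mul]
    congr 1
    rw [hEBi, Sym2.card_image_offDiag, Finset.card_erase_of_mem hv, hBcard]
  · rw [hEBv, Finset.sum_image (fun p _ q _ h => Sym2.congr_right.1 h)]
    exact Finset.sum_congr rfl fun p hp =>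
      MIMPB.fiber_eq ((mem_neighborFinset _ _ _).1 hp)
end

section
/- Define g(n) = 10^{n/5} and define f(n) by: f(n) = binom(n,2) for 1 ≤ n ≤ 8; f(n) = binom(⌊n/2⌋,2)·binom(⌈n/2⌉,2) − (⌊n/2⌋−1)(⌈n/2⌉−1) + 1 for 9 ≤ n ≤ 13; f(n) = 10^{(n-1)/5} + ((n+144)/30)·6^{(n-6)/5} for 14 ≤ n ≤ 30; f(n) = 10^{(n-1)/5} + ((n-1)/5)·6^{(n-6)/5} for n ≥ 31. Then for every positive integer n ≠ 5, f(n)/g(n) ≤ f(4)/g(4) < 0.9510. -/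
noncomputable def g (n : ℕ) : ℝ := (10 : ℝ) ^ ((n : ℝ) / 5)

noncomputable def f (n : ℕ) : ℝ :=
  if n ≤ 8 then (n.choose 2 : ℝ)
  else if n ≤ 13 then
    ((n / 2).choose 2 : ℝ) * (((n + 1) / 2).choose 2 : ℝ)
      - (((n / 2 : ℕ) : ℝ) - 1) * ((((n + 1) / 2 : ℕ) : ℝ) - 1) + 1
  else if n ≤ 30 then
    (10 : ℝ) ^ (((n : ℝ) - 1) / 5) + (((n : ℝ) + 144) / 30) * (6 : ℝ) ^ (((n : ℝ) - 6) / 5)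
  else
    (10 : ℝ) ^ (((n : ℝ) - 1) / 5) + (((n : ℝ) - 1) / 5) * (6 : ℝ) ^ (((n : ℝ) - 6) / 5)

/-!
Clearing denominators, `f n / g n ≤ f 4 / g 4` reads `f n * 10 ^ (4/5) ≤ 6 * 10 ^ (n/5)`, and
raising both sides to the fifth power turns any such comparison with explicit coefficients into one
between integers; this settles `n ≤ 13`. For `n ≥ 14` put `t = (n - 6)/5 ≥ 8/5`: then
`f n = 10 ^ (t + 1) + c * 6 ^ t` with `c ≤ 3 + 2 t`, and Bernoulli's inequality
`(5/3) ^ t ≥ 1 + 2 t / 3` gives `c * 6 ^ t ≤ 3 * 10 ^ t`. Hence `f n ≤ 13 * 10 ^ t`, which suffices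
because `13 * 10 ^ (4/5) ≤ 6 * 10 ^ (6/5)`.
-/

namespace Real

variable {x a b : ℝ} {k : ℕ}

theorem rpow_natCast_div_pow (hx : 0 ≤ x) (hk : k ≠ 0) (i : ℕ) :
    (x ^ ((i : ℝ) / k)) ^ k = x ^ i := by
  rw [← rpow_natCast, ← rpow_mul hx, div_mul_cancel₀ _ (Nat.cast_ne_zero.2 hk), rpow_natCast]

theorem mul_rpow_div_le_mul_rpow_div_iff (hx : 0 ≤ x) (ha : 0 ≤ a) (hb : 0 ≤ b) (hk : k ≠ 0)
    (i j : ℕ) : a * x ^ ((i : ℝ) / k) ≤ b * x ^ ((j : ℝ) / k) ↔ a ^ k * x ^ i ≤ b ^ k * x ^ j := by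
  rw [← pow_le_pow_iff_left₀ (by positivity) (by positivity) hk, mul_pow, mul_pow,
    rpow_natCast_div_pow hx hk, rpow_natCast_div_pow hx hk]

theorem mul_rpow_div_lt_mul_rpow_div_iff (hx : 0 ≤ x) (ha : 0 ≤ a) (hb : 0 ≤ b) (hk : k ≠ 0)
    (i j : ℕ) : a * x ^ ((i : ℝ) / k) < b * x ^ ((j : ℝ) / k) ↔ a ^ k * x ^ i < b ^ k * x ^ j := by
  rw [← pow_lt_pow_iff_left₀ (by positivity) (by positivity) hk, mul_pow, mul_pow,
    rpow_natCast_div_pow hx hk, rpow_natCast_div_pow hx hk]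

/-- Bernoulli's inequality `(b / a) ^ t ≥ 1 + t (b / a - 1)`, with denominators cleared. -/
theorem add_mul_sub_mul_rpow_le_mul_rpow {t : ℝ} (ha : 0 < a) (hb : 0 ≤ b) (ht : 1 ≤ t) :
    (a + t * (b - a)) * a ^ t ≤ a * b ^ t := by
  have bernoulli := one_add_mul_self_le_rpow_one_add (s := (b - a) / a)
    (by rw [le_div_iff₀ ha]; linarith) ht
  rw [show 1 + (b - a) / a = b / a by field_simp; ring, div_rpow hb ha.le,
    le_div_iff₀ (by positivity)] at bernoulli
  calc (a + t * (b - a)) * a ^ t = a * ((1 + t * ((b - a) / a)) * a ^ t) := by field_simp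
    _ ≤ a * b ^ t := by gcongr

end Real

open Real

theorem mul_g_le_mul_g_iff {a b : ℝ} (ha : 0 ≤ a) (hb : 0 ≤ b) (i j : ℕ) :
    a * g i ≤ b * g j ↔ a ^ 5 * 10 ^ i ≤ b ^ 5 * 10 ^ j := by
  simpa [g] using mul_rpow_div_le_mul_rpow_div_iff (x := 10) (k := 5) (by norm_num) ha hb
    (by norm_num) i j

theorem mul_g_lt_mul_g_iff {a b : ℝ} (ha : 0 ≤ a) (hb : 0 ≤ b) (i j : ℕ) :
    a * g i < b * g j ↔ a ^ 5 * 10 ^ i < b ^ 5 * 10 ^ j := by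
  simpa [g] using mul_rpow_div_lt_mul_rpow_div_iff (x := 10) (k := 5) (by norm_num) ha hb
    (by norm_num) i j

theorem f_four : f 4 = 6 := by norm_num [f, Nat.choose]

theorem f_mul_g_four_le_of_le_thirteen {n : ℕ} (h13 : n ≤ 13) (h5 : n ≠ 5) :
    f n * g 4 ≤ 6 * g n := by
  interval_cases n
  all_goals first
    | exact absurd rfl h5
    | rw [mul_g_le_mul_g_iff (by norm_num [f, Nat.choose]) (by norm_num)]
      norm_num [f, Nat.choose]

theorem f_le_of_fourteen_le {n : ℕ} (hn : 14 ≤ n) :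
    f n ≤ 13 * (10 : ℝ) ^ (((n : ℝ) - 6) / 5) := by
  set t := ((n : ℝ) - 6) / 5 with ht_def
  have hn' : (14 : ℝ) ≤ n := by exact_mod_cast hn
  obtain ⟨c, hc, hf⟩ : ∃ c ≤ 3 + 2 * t, f n = 10 ^ (t + 1) + c * 6 ^ t := by
    have h1 : ((n : ℝ) - 1) / 5 = t + 1 := by rw [ht_def]; ring
    by_cases h30 : n ≤ 30
    · refine ⟨((n : ℝ) + 144) / 30, by rw [ht_def]; linarith, ?_⟩
      rw [f, if_neg (by omega), if_neg (by omega), if_pos h30, h1]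
    · refine ⟨((n : ℝ) - 1) / 5, by rw [ht_def]; linarith, ?_⟩
      rw [f, if_neg (by omega), if_neg (by omega), if_neg h30, h1]
  have bernoulli : (6 + t * (10 - 6)) * (6 : ℝ) ^ t ≤ 6 * 10 ^ t :=
    add_mul_sub_mul_rpow_le_mul_rpow (by norm_num) (by norm_num) (by rw [ht_def]; linarith)
  have hc6 : c * 6 ^ t ≤ (3 + 2 * t) * 6 ^ t := by gcongr
  rw [hf, rpow_add_one (by norm_num)]
  linarith

theorem f_mul_g_four_le_of_fourteen_le {n : ℕ} (hn : 14 ≤ n) : f n * g 4 ≤ 6 * g n := by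
  have hgn : g n = 10 ^ (((n : ℝ) - 6) / 5) * g 6 := by
    rw [g, g, ← rpow_add (by norm_num)]; push_cast; ring_nf
  have hconst : 13 * g 4 ≤ 6 * g 6 :=
    (mul_g_le_mul_g_iff (by norm_num) (by norm_num) 4 6).2 (by norm_num)
  calc f n * g 4 ≤ 13 * (10 : ℝ) ^ (((n : ℝ) - 6) / 5) * g 4 :=
        mul_le_mul_of_nonneg_right (f_le_of_fourteen_le hn) (by unfold g; positivity)
    _ = 10 ^ (((n : ℝ) - 6) / 5) * (13 * g 4) := by ring
    _ ≤ 10 ^ (((n : ℝ) - 6) / 5) * (6 * g 6) := by gcongr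
    _ = 6 * g n := by rw [hgn]; ring

theorem f_div_g_le_of_ne_five :
    (∀ n : ℕ, 1 ≤ n → n ≠ 5 → f n / g n ≤ f 4 / g 4) ∧ f 4 / g 4 < 0.9510 := by
  have hg : ∀ n, 0 < g n := fun n => by unfold g; positivity
  refine ⟨fun n _ h5 => ?_, ?_⟩
  · rw [div_le_div_iff₀ (hg n) (hg 4), f_four]
    rcases le_or_gt n 13 with h13 | h14
    · exact f_mul_g_four_le_of_le_thirteen h13 h5
    · exact f_mul_g_four_le_of_fourteen_le h14
  · rw [div_lt_iff₀ (hg 4), f_four, ← mul_one 6, show (1 : ℝ) = g 0 by simp [g]]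
    exact (mul_g_lt_mul_g_iff (by norm_num) (by norm_num) 0 4).2 (by norm_num)
end

section
/- With f and g as defined (g(n) = 10^{n/5}, and f the piecewise function equal to binom(n,2) for 1 ≤ n ≤ 8, binom(⌊n/2⌋,2)·binom(⌈n/2⌉,2) − (⌊n/2⌋−1)(⌈n/2⌉−1) + 1 for 9 ≤ n ≤ 13, 10^{(n-1)/5} + ((n+144)/30)·6^{(n-6)/5} for 14 ≤ n ≤ 30, and 10^{(n-1)/5} + ((n-1)/5)·6^{(n-6)/5} for n ≥ 31), for every integer n ≥ 13 one has f(n)/g(n) ≤ f(14)/g(14) < 0.7778. -/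
open Real

noncomputable def fCoeff (n : ℕ) : ℝ :=
  if n ≤ 30 then ((n : ℝ) + 144) / 30 else ((n : ℝ) - 1) / 5

lemma f_eq_of_fourteen_le {n : ℕ} (hn : 14 ≤ n) :
    f n = 10 ^ (((n : ℝ) - 1) / 5) + fCoeff n * 6 ^ (((n : ℝ) - 6) / 5) := by
  unfold f fCoeff
  rw [if_neg (by omega), if_neg (by omega)]
  split_ifs <;> rfl

lemma fCoeff_nonneg {n : ℕ} (hn : 14 ≤ n) : 0 ≤ fCoeff n := by
  have : (14 : ℝ) ≤ n := by exact_mod_cast hn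
  unfold fCoeff
  split_ifs <;> linarith

lemma fCoeff_succ_le {n : ℕ} (hn : 14 ≤ n) : 29 * fCoeff (n + 1) ≤ 30 * fCoeff n := by
  have : (14 : ℝ) ≤ n := by exact_mod_cast hn
  unfold fCoeff
  push_cast
  split_ifs with h₁ h₂ h₂
  · linarith
  · omega
  · obtain rfl : n = 30 := by omega
    norm_num
  · have : (30 : ℝ) ≤ n := by exact_mod_cast (by omega : 30 ≤ n)
    linarith

lemma rpow_one_div_pow {x : ℝ} (hx : 0 ≤ x) (m : ℕ) (k : ℝ) :
    (x ^ (1 / k)) ^ m = x ^ ((m : ℝ) / k) := by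
  rw [← rpow_mul_natCast hx]
  ring_nf

section FifthRoots

local notation "α" => (10 : ℝ) ^ (1 / 5 : ℝ)
local notation "β" => (6 : ℝ) ^ (1 / 5 : ℝ)

lemma g_succ (n : ℕ) : g (n + 1) = α * g n := by
  rw [g, g, ← rpow_add (by norm_num)]
  push_cast
  ring_nf

lemma f_succ_le {n : ℕ} (hn : 14 ≤ n) : f (n + 1) ≤ α * f n := by
  have hexp : ∀ c : ℝ, ((↑(n + 1) : ℝ) - c) / 5 = ((n : ℝ) - c) / 5 + 1 / 5 := fun c => by
    push_cast; ring
  have hroots : 30 * β ≤ 29 * α := by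
    refine le_of_pow_le_pow_left₀ (n := 5) (by norm_num) (by positivity) ?_
    rw [mul_pow, mul_pow, rpow_one_div_pow (by norm_num), rpow_one_div_pow (by norm_num)]
    norm_num
  rw [f_eq_of_fourteen_le hn, f_eq_of_fourteen_le (by omega), hexp, hexp,
    rpow_add (by norm_num), rpow_add (by norm_num)]
  have hcoeff : fCoeff (n + 1) * β ≤ fCoeff n * α := by
    linarith [mul_le_mul_of_nonneg_left hroots (fCoeff_nonneg hn),
      mul_le_mul_of_nonneg_right (fCoeff_succ_le hn) (by positivity : (0 : ℝ) ≤ β)]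
  have hsix : (0 : ℝ) ≤ 6 ^ (((n : ℝ) - 6) / 5) := by positivity
  linarith [mul_le_mul_of_nonneg_right hcoeff hsix]

lemma f_div_g_succ_le {n : ℕ} (hn : 14 ≤ n) : f (n + 1) / g (n + 1) ≤ f n / g n := by
  have hα : (0 : ℝ) < α := by positivity
  calc f (n + 1) / g (n + 1) ≤ α * f n / (α * g n) := by
        rw [g_succ]
        gcongr
        · exact mul_nonneg hα.le (by unfold g; positivity)
        · exact f_succ_le hn
    _ = f n / g n := mul_div_mul_left _ _ hα.ne'

lemma fifth_root_pow_add {x : ℝ} (hx : 0 ≤ x) (k r : ℕ) :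
    (x ^ (1 / 5 : ℝ)) ^ (5 * k + r) = x ^ k * (x ^ (1 / 5 : ℝ)) ^ r := by
  rw [pow_add, pow_mul, rpow_one_div_pow hx]
  norm_num

lemma g_thirteen : g 13 = 100 * α ^ 3 := by
  rw [g, ← rpow_one_div_pow (by norm_num), fifth_root_pow_add (k := 2) (r := 3) (by norm_num)]
  norm_num

lemma g_fourteen : g 14 = 100 * α ^ 4 := by
  rw [g, ← rpow_one_div_pow (by norm_num), fifth_root_pow_add (k := 2) (r := 4) (by norm_num)]
  norm_num

lemma f_thirteen : f 13 = 286 := by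
  norm_num [f, Nat.choose]

lemma f_fourteen : f 14 = 100 * α ^ 3 + 158 / 5 * β ^ 3 := by
  rw [f_eq_of_fourteen_le le_rfl, show ((14 : ℕ) : ℝ) - 1 = (13 : ℕ) by norm_num,
    show ((14 : ℕ) : ℝ) - 6 = (8 : ℕ) by norm_num, ← rpow_one_div_pow (by norm_num),
    ← rpow_one_div_pow (by norm_num), fifth_root_pow_add (k := 2) (r := 3) (by norm_num),
    fifth_root_pow_add (k := 1) (r := 3) (by norm_num)]
  norm_num [fCoeff]
  ring

lemma fifth_root_ten_mem_Icc : α ∈ Set.Icc 1.5848931 1.5848932 := by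
  rw [Set.mem_Icc, one_div, le_rpow_inv_iff_of_pos (by norm_num) (by norm_num) (by norm_num),
    rpow_inv_le_iff_of_pos (by norm_num) (by norm_num) (by norm_num)]
  norm_num

lemma fifth_root_six_mem_Icc : β ∈ Set.Icc 1.4309690 1.4309691 := by
  rw [Set.mem_Icc, one_div, le_rpow_inv_iff_of_pos (by norm_num) (by norm_num) (by norm_num),
    rpow_inv_le_iff_of_pos (by norm_num) (by norm_num) (by norm_num)]
  norm_num

lemma f_div_g_thirteen_le : f 13 / g 13 ≤ f 14 / g 14 := by
  obtain ⟨hα₁, hα₂⟩ := fifth_root_ten_mem_Icc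
  obtain ⟨hβ₁, -⟩ := fifth_root_six_mem_Icc
  rw [f_thirteen, f_fourteen, g_thirteen, g_fourteen, div_le_div_iff₀ (by positivity) (by positivity)]
  have hα₃ : (1.5848931 : ℝ) ^ 3 ≤ α ^ 3 := pow_le_pow_left₀ (by norm_num) hα₁ 3
  have hβ₃ : (1.4309690 : ℝ) ^ 3 ≤ β ^ 3 := pow_le_pow_left₀ (by norm_num) hβ₁ 3
  have key : 286 * α ≤ 100 * α ^ 3 + 158 / 5 * β ^ 3 := by nlinarith
  calc 286 * (100 * α ^ 4) = 286 * α * (100 * α ^ 3) := by ring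
    _ ≤ (100 * α ^ 3 + 158 / 5 * β ^ 3) * (100 * α ^ 3) := by gcongr

lemma f_div_g_fourteen_lt : f 14 / g 14 < 0.7778 := by
  obtain ⟨hα₁, hα₂⟩ := fifth_root_ten_mem_Icc
  obtain ⟨-, hβ₂⟩ := fifth_root_six_mem_Icc
  rw [f_fourteen, g_fourteen, div_lt_iff₀ (by positivity)]
  have hα₃ : α ^ 3 ≤ (1.5848932 : ℝ) ^ 3 := pow_le_pow_left₀ (by positivity) hα₂ 3
  have hα₄ : (1.5848931 : ℝ) ^ 4 ≤ α ^ 4 := pow_le_pow_left₀ (by norm_num) hα₁ 4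
  have hβ₃ : β ^ 3 ≤ (1.4309691 : ℝ) ^ 3 := pow_le_pow_left₀ (by positivity) hβ₂ 3
  linarith

end FifthRoots

theorem f_div_g_le_of_ge_thirteen :
    (∀ n : ℕ, 13 ≤ n → f n / g n ≤ f 14 / g 14) ∧ f 14 / g 14 < 0.7778 := by
  have hanti : AntitoneOn (fun n ↦ f n / g n) {n | 14 ≤ n} :=
    antitoneOn_nat_Ici_of_succ_le fun n hn ↦ f_div_g_succ_le hn
  refine ⟨fun n hn ↦ ?_, f_div_g_fourteen_lt⟩
  rcases hn.eq_or_lt with rfl | hn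
  · exact f_div_g_thirteen_le
  · exact hanti (le_refl 14) hn hn
end

section
/- Let G be the graph K_1 ∗ (m·K_5) for m ≥ 1, obtained from the disjoint union of m copies of K_5 and one extra vertex u by joining u to exactly one vertex in each copy of K_5. Then the number of maximal induced matchings of G equals 10^m + m·6^{m-1}. -/
open SimpleGraph

/-- The graph `K₁ ∗ (m·K₅)`: the vertex `Sum.inl ()` is joined to exactly one vertex
(the one with second coordinate `0`) in each of the `m` disjoint copies of `K₅`. -/
def starK5 (m : ℕ) : SimpleGraph (Unit ⊕ (Fin m × Fin 5)) where
  Adj x y :=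
    match x, y with
    | Sum.inl _, Sum.inl _ => False
    | Sum.inl _, Sum.inr (_, a) => a = 0
    | Sum.inr (_, a), Sum.inl _ => a = 0
    | Sum.inr (i, a), Sum.inr (j, b) => i = j ∧ a ≠ b
  symm := by
    constructor
    rintro (x | ⟨i, a⟩) (y | ⟨j, b⟩) h
    · exact h.elim
    · exact h
    · exact h
    · exact ⟨h.1.symm, h.2.symm⟩
  loopless := by
    constructor
    rintro (x | ⟨i, a⟩) h
    · exact h
    · exact h.2 rfl

namespace StarK5Aux

variable {m : ℕ}

abbrev V (m : ℕ) := Unit ⊕ (Fin m × Fin 5)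

@[simp] lemma adj_inl_inl {x y : Unit} :
    ¬ (starK5 m).Adj (Sum.inl x) (Sum.inl y) := fun h => h

@[simp] lemma adj_inl_inr {x : Unit} {i : Fin m} {a : Fin 5} :
    (starK5 m).Adj (Sum.inl x) (Sum.inr (i, a)) ↔ a = 0 := Iff.rfl

@[simp] lemma adj_inr_inl {x : Unit} {i : Fin m} {a : Fin 5} :
    (starK5 m).Adj (Sum.inr (i, a)) (Sum.inl x) ↔ a = 0 := Iff.rfl

@[simp] lemma adj_inr_inr {i j : Fin m} {a b : Fin 5} :
    (starK5 m).Adj (Sum.inr (i, a)) (Sum.inr (j, b)) ↔ i = j ∧ a ≠ b := Iff.rfl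

def lift (i : Fin m) (p : Sym2 (Fin 5)) : Sym2 (V m) := p.map (fun a => Sum.inr (i, a))

def uEdge (i : Fin m) : Sym2 (V m) := s(Sum.inl (), Sum.inr (i, 0))

lemma mem_lift {x : V m} {i : Fin m} {p : Sym2 (Fin 5)} :
    x ∈ lift i p ↔ ∃ a ∈ p, x = Sum.inr (i, a) := by
  simp [lift, Sym2.mem_map, eq_comm]

lemma inl_not_mem_lift {x : Unit} {i : Fin m} {p : Sym2 (Fin 5)} :
    Sum.inl x ∉ lift i p := by
  simp [mem_lift]

lemma uEdge_ne_lift {i j : Fin m} {p : Sym2 (Fin 5)} : uEdge i ≠ lift j p := by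
  intro h
  exact inl_not_mem_lift (x := ()) (h ▸ (by simp [uEdge] : (Sum.inl () : V m) ∈ uEdge i))

lemma lift_inj : Function.Injective (fun a : Fin 5 => (Sum.inr (i, a) : V m)) :=
  fun a b h => by simpa using h

lemma lift_eq_iff {i j : Fin m} {p q : Sym2 (Fin 5)} : lift i p = lift j q ↔ i = j ∧ p = q := by
  constructor
  · intro h
    induction p using Sym2.ind with
    | _ a b =>
      have ha : (Sum.inr (i, a) : V m) ∈ lift j q := by
        rw [← h, mem_lift]; exact ⟨a, by simp, rfl⟩
      obtain ⟨c, hc, hca⟩ := mem_lift.mp ha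
      obtain ⟨rfl, -⟩ : i = j ∧ a = c := by
        have := Sum.inr.inj hca; exact ⟨congrArg Prod.fst this, congrArg Prod.snd this⟩
      exact ⟨rfl, Sym2.map.injective lift_inj h⟩
  · rintro ⟨rfl, rfl⟩; rfl

lemma uEdge_eq_iff {i j : Fin m} : uEdge i = uEdge j ↔ i = j := by
  constructor
  · intro h
    rw [uEdge, uEdge, Sym2.eq_iff] at h
    rcases h with ⟨-, h⟩ | ⟨h, -⟩
    · exact congrArg Prod.fst (Sum.inr.inj h)
    · exact (Sum.inl_ne_inr h).elim
  · rintro rfl; rfl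

lemma lift_mem_edgeSet_iff {i : Fin m} {p : Sym2 (Fin 5)} :
    lift i p ∈ (starK5 m).edgeSet ↔ ¬ p.IsDiag := by
  induction p using Sym2.ind with
  | _ a b =>
    rw [lift, Sym2.map_pair_eq, mem_edgeSet, Sym2.mk_isDiag_iff]
    simp

lemma uEdge_mem_edgeSet {i : Fin m} : uEdge i ∈ (starK5 m).edgeSet := by
  rw [uEdge, mem_edgeSet]; exact rfl

lemma edge_cases {e : Sym2 (V m)} (he : e ∈ (starK5 m).edgeSet) :
    (∃ i, e = uEdge i) ∨ ∃ i p, ¬ Sym2.IsDiag p ∧ e = lift i p := by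
  induction e using Sym2.ind with
  | _ x y =>
    rw [mem_edgeSet] at he
    obtain (⟨⟩ | ⟨i, a⟩) := x <;> obtain (⟨⟩ | ⟨j, b⟩) := y
    · exact (adj_inl_inl he).elim
    · left; rw [adj_inl_inr] at he; subst he; exact ⟨j, rfl⟩
    · left; rw [adj_inr_inl] at he; subst he; exact ⟨i, Sym2.eq_swap⟩
    · right
      rw [adj_inr_inr] at he
      obtain ⟨rfl, hab⟩ := he
      exact ⟨i, s(a, b), by rwa [Sym2.mk_isDiag_iff], by rw [lift, Sym2.map_pair_eq]⟩
abbrev E10 := {p : Sym2 (Fin 5) // ¬ p.IsDiag}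
abbrev E6 := {p : Sym2 (Fin 5) // ¬ p.IsDiag ∧ (0 : Fin 5) ∉ p}

def setA (m : ℕ) (f : Fin m → E10) : Set (Sym2 (V m)) :=
  Set.range fun i => lift i (f i).1

def setB (m : ℕ) (i : Fin m) (g : {j : Fin m // j ≠ i} → E6) : Set (Sym2 (V m)) :=
  insert (uEdge i) (Set.range fun j => lift j.1 (g j).1)

lemma sym2_exists_mem (p : Sym2 (Fin 5)) : ∃ a, a ∈ p := by
  induction p using Sym2.ind with
  | _ a b => exact ⟨a, by simp⟩

lemma lift_far {i j : Fin m} (hij : i ≠ j) {p q : Sym2 (Fin 5)}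
    {a b : V m} (ha : a ∈ lift i p) (hb : b ∈ lift j q) :
    a ≠ b ∧ ¬ (starK5 m).Adj a b := by
  obtain ⟨c, -, rfl⟩ := mem_lift.mp ha
  obtain ⟨d, -, rfl⟩ := mem_lift.mp hb
  exact ⟨fun h => hij (congrArg Prod.fst (Sum.inr.inj h)), fun h => hij (adj_inr_inr.mp h).1⟩

lemma lift_far_uEdge {i j : Fin m} (hij : j ≠ i) {q : Sym2 (Fin 5)} (h0 : (0 : Fin 5) ∉ q)
    {a b : V m} (ha : a ∈ lift j q) (hb : b ∈ uEdge i) :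
    a ≠ b ∧ ¬ (starK5 m).Adj a b := by
  obtain ⟨c, hc, rfl⟩ := mem_lift.mp ha
  have hc0 : c ≠ 0 := fun h => h0 (h ▸ hc)
  rw [uEdge, Sym2.mem_iff] at hb
  rcases hb with rfl | rfl
  · exact ⟨fun h => Sum.inl_ne_inr h.symm, fun h => hc0 (adj_inr_inl.mp h)⟩
  · exact ⟨fun h => hij (congrArg Prod.fst (Sum.inr.inj h)), fun h => hij (adj_inr_inr.mp h).1⟩

/-- Two edges in the same copy cannot both satisfy the far condition. -/
lemma same_copy_clash {p q : Sym2 (Fin 5)} {i : Fin m}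
    (h : ∀ a ∈ lift i p, ∀ b ∈ lift i q, a ≠ b ∧ ¬ (starK5 m).Adj a b) : False := by
  obtain ⟨a, ha⟩ := sym2_exists_mem p
  obtain ⟨c, hc⟩ := sym2_exists_mem q
  have h' := h _ (mem_lift.mpr ⟨a, ha, rfl⟩) _ (mem_lift.mpr ⟨c, hc, rfl⟩)
  have hac : a ≠ c := fun h'' => h'.1 (by rw [h''])
  exact h'.2 (adj_inr_inr.mpr ⟨rfl, hac⟩)

/-- uEdge i and any edge in copy i cannot both satisfy the far condition. -/
lemma uEdge_copy_clash {p : Sym2 (Fin 5)} {i : Fin m}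
    (h : ∀ a ∈ uEdge i, ∀ b ∈ lift i p, a ≠ b ∧ ¬ (starK5 m).Adj a b) : False := by
  obtain ⟨c, hc⟩ := sym2_exists_mem p
  have h' := h (Sum.inr (i, 0)) (by simp [uEdge]) _ (mem_lift.mpr ⟨c, hc, rfl⟩)
  have hc0 : (0 : Fin 5) ≠ c := fun h'' => h'.1 (by rw [h''])
  exact h'.2 (adj_inr_inr.mpr ⟨rfl, hc0⟩)

/-- uEdge i and a lifted edge containing 0 in any copy cannot both satisfy the far condition. -/
lemma uEdge_zero_clash {p : Sym2 (Fin 5)} {i j : Fin m} (h0 : (0 : Fin 5) ∈ p)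
    (h : ∀ a ∈ uEdge i, ∀ b ∈ lift j p, a ≠ b ∧ ¬ (starK5 m).Adj a b) : False := by
  have h' := h (Sum.inl ()) (by simp [uEdge]) _ (mem_lift.mpr ⟨0, h0, rfl⟩)
  exact h'.2 (adj_inl_inr.mpr rfl)

lemma setA_isMaximal (f : Fin m → E10) :
    IsMaximalInducedMatching (starK5 m) (setA m f) := by
  have hind : IsInducedMatching (starK5 m) (setA m f) := by
    constructor
    · rintro e ⟨i, rfl⟩
      exact lift_mem_edgeSet_iff.mpr (f i).2
    · rintro e ⟨i, rfl⟩ e' ⟨j, rfl⟩ hne a ha b hb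
      exact lift_far (fun h : i = j => hne (by rw [h])) ha hb
  refine ⟨hind, fun M' hM' hsub => ?_⟩
  ext e
  refine ⟨fun he => ?_, fun he => hsub he⟩
  by_contra heA
  rcases edge_cases (hM'.1 he) with ⟨i, rfl⟩ | ⟨i, p, hp, rfl⟩
  · exact uEdge_copy_clash (hM'.2 _ he _ (hsub ⟨i, rfl⟩) uEdge_ne_lift)
  · have hne : lift i p ≠ lift i (f i).1 := fun h => heA ⟨i, h.symm⟩
    exact same_copy_clash (hM'.2 _ he _ (hsub ⟨i, rfl⟩) hne)

lemma setB_isMaximal (i : Fin m) (g : {j : Fin m // j ≠ i} → E6) :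
    IsMaximalInducedMatching (starK5 m) (setB m i g) := by
  have hind : IsInducedMatching (starK5 m) (setB m i g) := by
    constructor
    · rintro e (rfl | ⟨j, rfl⟩)
      · exact uEdge_mem_edgeSet
      · exact lift_mem_edgeSet_iff.mpr (g j).2.1
    · rintro e (rfl | ⟨j, rfl⟩) e' (rfl | ⟨j', rfl⟩) hne a ha b hb
      · exact (hne rfl).elim
      · have h := lift_far_uEdge j'.2 (g j').2.2 hb ha
        exact ⟨h.1.symm, fun hadj => h.2 hadj.symm⟩
      · exact lift_far_uEdge j.2 (g j).2.2 ha hb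
      · have hjj : j.1 ≠ j'.1 := by
          intro h
          apply hne
          congr 1
          exact Subtype.ext h
        exact lift_far hjj ha hb
  refine ⟨hind, fun M' hM' hsub => ?_⟩
  have huM : uEdge i ∈ M' := hsub (Set.mem_insert _ _)
  ext e
  refine ⟨fun he => ?_, fun he => hsub he⟩
  by_contra heB
  rcases edge_cases (hM'.1 he) with ⟨k, rfl⟩ | ⟨j, p, hp, rfl⟩
  · have hki : k ≠ i := fun h => heB (by subst h; exact Set.mem_insert _ _)
    have hne : uEdge k ≠ uEdge i := fun h => hki (uEdge_eq_iff.mp h)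
    have h' := hM'.2 _ he _ huM hne (Sum.inl ()) (by simp [uEdge]) (Sum.inl ()) (by simp [uEdge])
    exact h'.1 rfl
  · by_cases hji : j = i
    · subst hji
      exact uEdge_copy_clash fun a ha b hb =>
        have h' := hM'.2 _ he _ huM (fun h => uEdge_ne_lift h.symm) b hb a ha
        ⟨h'.1.symm, fun hadj => h'.2 hadj.symm⟩
    · have hgj : lift j (g ⟨j, hji⟩).1 ∈ M' := hsub (Set.mem_insert_of_mem _ ⟨⟨j, hji⟩, rfl⟩)
      have hne : lift j p ≠ lift j (g ⟨j, hji⟩).1 := fun h =>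
        heB (by rw [h]; exact Set.mem_insert_of_mem _ ⟨⟨j, hji⟩, rfl⟩)
      exact same_copy_clash (hM'.2 _ he _ hgj hne)
lemma far_symm {α : Type*} {G : SimpleGraph α} {e f : Sym2 α}
    (h : ∀ a ∈ e, ∀ b ∈ f, a ≠ b ∧ ¬ G.Adj a b) :
    ∀ a ∈ f, ∀ b ∈ e, a ≠ b ∧ ¬ G.Adj a b := fun a ha b hb =>
  ⟨(h b hb a ha).1.symm, fun hadj => (h b hb a ha).2 hadj.symm⟩

lemma maximal_classify {M : Set (Sym2 (V m))}
    (hM : IsMaximalInducedMatching (starK5 m) M) :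
    (∃ f : Fin m → E10, M = setA m f) ∨
      ∃ (i : Fin m) (g : {j : Fin m // j ≠ i} → E6), M = setB m i g := by
  obtain ⟨⟨hsub, hpair⟩, hmax⟩ := hM
  -- uniqueness of the edge in each copy
  have hunique : ∀ (j : Fin m) (p q : Sym2 (Fin 5)),
      lift j p ∈ M → lift j q ∈ M → p = q := by
    intro j p q hp hq
    by_cases h : lift j p = lift j q
    · exact (lift_eq_iff.mp h).2
    · exact (same_copy_clash (hpair _ hp _ hq h)).elim
  by_cases hu : ∃ i, uEdge i ∈ M
  · right
    obtain ⟨i, hi⟩ := hu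
    have hukey : ∀ k, uEdge k ∈ M → k = i := by
      intro k hk
      by_contra hki
      have hne : uEdge k ≠ uEdge i := fun h => hki (uEdge_eq_iff.mp h)
      exact (hpair _ hk _ hi hne (Sum.inl ()) (by simp [uEdge]) (Sum.inl ())
        (by simp [uEdge])).1 rfl
    have hprops : ∀ (j : Fin m) (p : Sym2 (Fin 5)), lift j p ∈ M →
        ¬ p.IsDiag ∧ (0 : Fin 5) ∉ p ∧ j ≠ i := by
      intro j p hp
      refine ⟨lift_mem_edgeSet_iff.mp (hsub hp), ?_, ?_⟩
      · intro h0
        exact uEdge_zero_clash h0 (hpair _ hi _ hp uEdge_ne_lift)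
      · rintro rfl
        exact uEdge_copy_clash (hpair _ hi _ hp uEdge_ne_lift)
    have hex : ∀ j : Fin m, j ≠ i → ∃ p, lift j p ∈ M := by
      intro j hj
      by_contra hno
      push_neg at hno
      set e : Sym2 (V m) := lift j s(1, 2) with he_def
      have heM : e ∉ M := hno _
      have hfar : ∀ f ∈ M, ∀ a ∈ e, ∀ b ∈ f, a ≠ b ∧ ¬ (starK5 m).Adj a b := by
        intro f hf a ha b hb
        rcases edge_cases (hsub hf) with ⟨k, rfl⟩ | ⟨k, p, hp, rfl⟩
        · have hki : k = i := hukey _ hf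
          subst hki
          exact lift_far_uEdge hj (by decide) ha hb
        · have hkj : j ≠ k := fun h => hno p (h ▸ hf)
          exact lift_far hkj ha hb
      have hM' : IsInducedMatching (starK5 m) (insert e M) := by
        constructor
        · rintro x (rfl | hx)
          · exact lift_mem_edgeSet_iff.mpr (by decide)
          · exact hsub hx
        · rintro e1 (rfl | h1) e2 (rfl | h2) hne a ha b hb
          · exact (hne rfl).elim
          · exact hfar _ h2 a ha b hb
          · exact far_symm (hfar _ h1) a ha b hb
          · exact hpair _ h1 _ h2 hne a ha b hb
      exact heM (hmax _ hM' (Set.subset_insert _ _) ▸ Set.mem_insert e M)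
    choose g hg using fun j : {j : Fin m // j ≠ i} => hex j.1 j.2
    refine ⟨i, fun j => ⟨g j, (hprops _ _ (hg j)).1, (hprops _ _ (hg j)).2.1⟩, ?_⟩
    ext e
    constructor
    · intro he
      rcases edge_cases (hsub he) with ⟨k, rfl⟩ | ⟨k, p, hp, rfl⟩
      · rw [uEdge_eq_iff.mpr (hukey _ he)]
        exact Set.mem_insert _ _
      · have hki : k ≠ i := (hprops _ _ he).2.2
        have : p = g ⟨k, hki⟩ := hunique _ _ _ he (hg ⟨k, hki⟩)
        exact Set.mem_insert_of_mem _ ⟨⟨k, hki⟩, by rw [this]⟩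
    · rintro (rfl | ⟨j, rfl⟩)
      · exact hi
      · exact hg j
  · left
    push_neg at hu
    have hex : ∀ i : Fin m, ∃ p, lift i p ∈ M := by
      intro i
      by_contra hno
      push_neg at hno
      set e : Sym2 (V m) := lift i s(1, 2) with he_def
      have heM : e ∉ M := hno _
      have hfar : ∀ f ∈ M, ∀ a ∈ e, ∀ b ∈ f, a ≠ b ∧ ¬ (starK5 m).Adj a b := by
        intro f hf a ha b hb
        rcases edge_cases (hsub hf) with ⟨k, rfl⟩ | ⟨k, p, hp, rfl⟩
        · exact (hu k hf).elim
        · have hki : i ≠ k := fun h => hno p (h ▸ hf)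
          exact lift_far hki ha hb
      have hM' : IsInducedMatching (starK5 m) (insert e M) := by
        constructor
        · rintro x (rfl | hx)
          · exact lift_mem_edgeSet_iff.mpr (by decide)
          · exact hsub hx
        · rintro e1 (rfl | h1) e2 (rfl | h2) hne a ha b hb
          · exact (hne rfl).elim
          · exact hfar _ h2 a ha b hb
          · exact far_symm (hfar _ h1) a ha b hb
          · exact hpair _ h1 _ h2 hne a ha b hb
      exact heM (hmax _ hM' (Set.subset_insert _ _) ▸ Set.mem_insert e M)
    choose f hf using hex
    refine ⟨fun i => ⟨f i, lift_mem_edgeSet_iff.mp (hsub (hf i))⟩, ?_⟩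
    ext e
    constructor
    · intro he
      rcases edge_cases (hsub he) with ⟨k, rfl⟩ | ⟨k, p, hp, rfl⟩
      · exact (hu k he).elim
      · exact ⟨k, by rw [hunique _ _ _ he (hf k)]⟩
    · rintro ⟨i, rfl⟩
      exact hf i
lemma setA_inj : Function.Injective (setA (m := m)) := by
  intro f f' h
  funext i
  obtain ⟨j, hj⟩ : lift i (f i).1 ∈ setA m f' := h ▸ ⟨i, rfl⟩
  obtain ⟨rfl, hpq⟩ := lift_eq_iff.mp hj
  exact (Subtype.ext hpq).symm

lemma setB_inj :
    Function.Injective (fun x : Σ i : Fin m, ({j : Fin m // j ≠ i} → E6) =>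
      setB m x.1 x.2) := by
  rintro ⟨i, g⟩ ⟨i', g'⟩ h
  simp only at h
  obtain rfl : i = i' := by
    have : uEdge i ∈ setB m i' g' := h ▸ Set.mem_insert _ _
    rcases this with h' | ⟨j, hj⟩
    · exact uEdge_eq_iff.mp h'
    · exact (uEdge_ne_lift hj.symm).elim
  obtain rfl : g = g' := by
    funext j
    have : lift j.1 (g j).1 ∈ setB m i g' := h ▸ Set.mem_insert_of_mem _ ⟨j, rfl⟩
    rcases this with h' | ⟨j', hj'⟩
    · exact (uEdge_ne_lift h'.symm).elim
    · obtain ⟨hjj, hpq⟩ := lift_eq_iff.mp hj'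
      have : j' = j := Subtype.ext hjj
      subst this
      exact (Subtype.ext hpq.symm)
  rfl

lemma the_set_eq :
    {M : Set (Sym2 (V m)) | IsMaximalInducedMatching (starK5 m) M} =
      Set.range (setA m) ∪
        Set.range (fun x : Σ i : Fin m, ({j : Fin m // j ≠ i} → E6) =>
          setB m x.1 x.2) := by
  ext M
  constructor
  · intro hM
    rcases maximal_classify hM with ⟨f, rfl⟩ | ⟨i, g, rfl⟩
    · exact Or.inl ⟨f, rfl⟩
    · exact Or.inr ⟨⟨i, g⟩, rfl⟩
  · rintro (⟨f, rfl⟩ | ⟨⟨i, g⟩, rfl⟩)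
    · exact setA_isMaximal f
    · exact setB_isMaximal i g

lemma the_disjoint :
    Disjoint (Set.range (setA m))
      (Set.range (fun x : Σ i : Fin m, ({j : Fin m // j ≠ i} → E6) =>
        setB m x.1 x.2)) := by
  rw [Set.disjoint_left]
  rintro M ⟨f, rfl⟩ ⟨⟨i, g⟩, hB⟩
  have : uEdge i ∈ setA m f := by rw [← hB]; exact Set.mem_insert _ _
  obtain ⟨j, hj⟩ := this
  exact uEdge_ne_lift hj.symm

lemma card_subtype_ne (i : Fin m) : Fintype.card {j : Fin m // j ≠ i} = m - 1 := by
  have : Fintype.card {j : Fin m // j = i} = 1 := Fintype.card_subtype_eq i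
  have h2 := Fintype.card_subtype_compl (fun j : Fin m => j = i)
  simp only [this, Fintype.card_fin] at h2
  convert h2 using 2

end StarK5Aux

open StarK5Aux in
theorem mim_star_K5 (m : ℕ) (hm : 1 ≤ m) :
    mim (starK5 m) = 10 ^ m + m * 6 ^ (m - 1) := by
  rw [mim, the_set_eq, Set.ncard_union_eq the_disjoint (Set.finite_range _)
    (Set.finite_range _)]
  have hA : (Set.range (setA m)).ncard = 10 ^ m := by
    rw [← Nat.card_coe_set_eq, Nat.card_range_of_injective setA_inj,
      Nat.card_eq_fintype_card, Fintype.card_fun, Fintype.card_fin,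
      show Fintype.card E10 = 10 from by decide]
  have hB : (Set.range (fun x : Σ i : Fin m, ({j : Fin m // j ≠ i} → E6) =>
      setB m x.1 x.2)).ncard = m * 6 ^ (m - 1) := by
    rw [← Nat.card_coe_set_eq, Nat.card_range_of_injective setB_inj,
      Nat.card_eq_fintype_card, Fintype.card_sigma]
    have : ∀ i : Fin m, Fintype.card ({j : Fin m // j ≠ i} → E6) = 6 ^ (m - 1) := by
      intro i
      rw [Fintype.card_fun, card_subtype_ne,
        show Fintype.card E6 = 6 from by decide]
    simp only [this, Finset.sum_const, Finset.card_univ, Fintype.card_fin, smul_eq_mul]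
  rw [hA, hB]
end

section
/- Let G be a graph of order n with a vertex v of degree n−1 (adjacent to all other vertices), and suppose |M_H| ≤ 10^{(n-1)/5} for every induced subgraph H of G−v. Then |M_G| ≤ 10^{(n-1)/5} + (n−1). -/
open SimpleGraph

section Aux

variable {V : Type*} {G : SimpleGraph V} {S : Set V}

lemma aux_map_mem_edgeSet (e' : Sym2 S) :
    Sym2.map Subtype.val e' ∈ G.edgeSet ↔ e' ∈ (G.induce S).edgeSet := by
  induction e' using Sym2.inductionOn with
  | hf a b => simp [Sym2.map_pair_eq, mem_edgeSet]

lemma aux_image_inducedMatching {M' : Set (Sym2 S)}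
    (h : IsInducedMatching (G.induce S) M') :
    IsInducedMatching G (Sym2.map Subtype.val '' M') := by
  constructor
  · rintro e ⟨e', he', rfl⟩
    exact (aux_map_mem_edgeSet e').mpr (h.1 he')
  · rintro e ⟨e', he', rfl⟩ f ⟨f', hf', rfl⟩ hne a ha b hb
    rw [Sym2.mem_map] at ha hb
    obtain ⟨a', ha', rfl⟩ := ha
    obtain ⟨b', hb', rfl⟩ := hb
    have hne' : e' ≠ f' := by rintro rfl; exact hne rfl
    obtain ⟨h1, h2⟩ := h.2 e' he' f' hf' hne' a' ha' b' hb'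
    refine ⟨Subtype.val_injective.ne h1, fun hadj => h2 ?_⟩
    exact hadj

lemma aux_preimage_inducedMatching {M : Set (Sym2 V)}
    (h : IsInducedMatching G M) :
    IsInducedMatching (G.induce S) (Sym2.map Subtype.val ⁻¹' M) := by
  constructor
  · intro e' he'
    exact (aux_map_mem_edgeSet e').mp (h.1 he')
  · intro e' he' f' hf' hne a' ha' b' hb'
    have hne2 : Sym2.map Subtype.val e' ≠ Sym2.map Subtype.val f' :=
      (Sym2.map.injective Subtype.val_injective).ne hne
    obtain ⟨h1, h2⟩ := h.2 _ he' _ hf' hne2 (a' : V) (Sym2.mem_map.mpr ⟨a', ha', rfl⟩)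
      (b' : V) (Sym2.mem_map.mpr ⟨b', hb', rfl⟩)
    exact ⟨fun hab => h1 (congrArg Subtype.val hab), fun hadj => h2 hadj⟩

end Aux

theorem mim_le_of_dominating_vertex {V : Type*} [Fintype V] [DecidableEq V]
    (G : SimpleGraph V) [DecidableRel G.Adj] (n : ℕ) (hn : Fintype.card V = n)
    (v : V) (hv : G.degree v = n - 1)
    (hsub : ∀ S : Set V, v ∉ S → (mim (G.induce S) : ℝ) ≤ (10 : ℝ) ^ (((n : ℝ) - 1) / 5)) :
    (mim G : ℝ) ≤ (10 : ℝ) ^ (((n : ℝ) - 1) / 5) + ((n : ℝ) - 1) := by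
  classical
  have hn1 : 1 ≤ n := by
    rw [← hn]
    exact Fintype.card_pos_iff.mpr ⟨v⟩
  -- v is adjacent to all other vertices
  have hadj : ∀ w : V, w ≠ v → G.Adj v w := by
    have hsubset : G.neighborFinset v ⊆ Finset.univ.erase v := by
      intro w hw
      rw [mem_neighborFinset] at hw
      exact Finset.mem_erase.mpr ⟨(G.ne_of_adj hw).symm, Finset.mem_univ w⟩
    have hcard : (Finset.univ.erase v).card ≤ (G.neighborFinset v).card := by
      rw [Finset.card_erase_of_mem (Finset.mem_univ v), Finset.card_univ, hn]
      rw [← card_neighborFinset_eq_degree] at hv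
      omega
    have heq := Finset.eq_of_subset_of_card_le hsubset hcard
    intro w hw
    have : w ∈ G.neighborFinset v := by
      rw [heq]; exact Finset.mem_erase.mpr ⟨hw, Finset.mem_univ w⟩
    exact (mem_neighborFinset G v w).mp this
  set T := {M : Set (Sym2 V) | IsMaximalInducedMatching G M} with hT
  set A := {M : Set (Sym2 V) | IsMaximalInducedMatching G M ∧ ∃ e ∈ M, v ∈ e} with hA
  set B := {M : Set (Sym2 V) | IsMaximalInducedMatching G M ∧ ∀ e ∈ M, v ∉ e} with hB
  have hTAB : T ⊆ A ∪ B := by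
    intro M hM
    by_cases h : ∃ e ∈ M, v ∈ e
    · exact Or.inl ⟨hM, h⟩
    · exact Or.inr ⟨hM, fun e he hvm => h ⟨e, he, hvm⟩⟩
  -- bound on A
  have hAsub : A ⊆ (fun p => ({s(v, p)} : Set (Sym2 V))) '' (G.neighborSet v) := by
    rintro M ⟨hM, e, he, hve⟩
    have hMe : M = {e} := by
      ext f
      simp only [Set.mem_singleton_iff]
      constructor
      · intro hf
        by_contra hne
        induction f using Sym2.inductionOn with
        | hf x y =>
          obtain ⟨h1, h2⟩ := hM.1.2 e he _ hf (fun h => hne h.symm) v hve x (by simp)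
          exact h2 (hadj x (fun h => h1 h.symm))
      · rintro rfl; exact he
    have heE : e ∈ G.edgeSet := hM.1.1 he
    induction e using Sym2.inductionOn with
    | hf x y =>
      rw [mem_edgeSet] at heE
      rw [Sym2.mem_iff] at hve
      rcases hve with rfl | rfl
      · exact ⟨y, heE, by rw [hMe]⟩
      · exact ⟨x, heE.symm, by rw [hMe, Sym2.eq_swap]⟩
  have hAcard : A.ncard ≤ n - 1 := by
    calc A.ncard ≤ ((fun p => ({s(v, p)} : Set (Sym2 V))) '' (G.neighborSet v)).ncard :=
          Set.ncard_le_ncard hAsub (Set.toFinite _)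
      _ ≤ (G.neighborSet v).ncard := Set.ncard_image_le (Set.toFinite _)
      _ = G.degree v := by
          rw [Set.ncard_eq_toFinset_card']
          rfl
      _ = n - 1 := hv
  -- bound on B
  set S : Set V := {v}ᶜ with hS
  have hvS : v ∉ S := by simp [hS]
  set f : Sym2 S → Sym2 V := Sym2.map Subtype.val with hf
  have finj : Function.Injective f := Sym2.map.injective Subtype.val_injective
  have hlift : ∀ e : Sym2 V, v ∉ e → ∃ e' : Sym2 S, f e' = e := by
    intro e hve
    induction e using Sym2.inductionOn with
    | hf a b =>
      rw [Sym2.mem_iff] at hve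
      push_neg at hve
      exact ⟨s(⟨a, fun h => hve.1 (by simpa using h.symm)⟩,
             ⟨b, fun h => hve.2 (by simpa using h.symm)⟩), rfl⟩
  have himg : ∀ M ∈ B, f '' (f ⁻¹' M) = M := by
    rintro M ⟨hM, hMv⟩
    apply Set.Subset.antisymm (Set.image_preimage_subset f M)
    intro e he
    obtain ⟨e', he'⟩ := hlift e (hMv e he)
    exact ⟨e', by simp only [Set.mem_preimage, he']; exact he, he'⟩
  have hBmaps : ∀ M ∈ B, (f ⁻¹' M) ∈ {M' : Set (Sym2 S) | IsMaximalInducedMatching (G.induce S) M'} := by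
    rintro M hMB
    obtain ⟨hM, hMv⟩ := hMB
    refine ⟨aux_preimage_inducedMatching hM.1, ?_⟩
    intro M' hM' hsubM'
    have himgM' : IsInducedMatching G (f '' M') := aux_image_inducedMatching hM'
    have hMsub : M ⊆ f '' M' := by
      rw [← himg M ⟨hM, hMv⟩]
      exact Set.image_mono hsubM'
    have := hM.2 (f '' M') himgM' hMsub
    apply Set.Subset.antisymm
    · intro e' he'
      have : f e' ∈ M := this ▸ ⟨e', he', rfl⟩
      exact this
    · exact hsubM'
  have hBinj : Set.InjOn (fun M => f ⁻¹' M) B := by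
    intro M₁ h₁ M₂ h₂ heq
    rw [← himg M₁ h₁, ← himg M₂ h₂]
    simp only at heq
    rw [heq]
  have hBcard : B.ncard ≤ mim (G.induce S) := by
    exact Set.ncard_le_ncard_of_injOn _ hBmaps hBinj (Set.toFinite _)
  -- combine
  have hmain : mim G ≤ mim (G.induce S) + (n - 1) := by
    calc mim G = T.ncard := rfl
      _ ≤ (A ∪ B).ncard := Set.ncard_le_ncard hTAB (Set.toFinite _)
      _ ≤ A.ncard + B.ncard := Set.ncard_union_le A B
      _ ≤ (n - 1) + mim (G.induce S) := Nat.add_le_add hAcard hBcard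
      _ = mim (G.induce S) + (n - 1) := Nat.add_comm _ _
  have hcast : ((mim G : ℕ) : ℝ) ≤ (mim (G.induce S) : ℝ) + ((n : ℝ) - 1) := by
    have : ((n - 1 : ℕ) : ℝ) = (n : ℝ) - 1 := by
      rw [Nat.cast_sub hn1]; norm_num
    calc ((mim G : ℕ) : ℝ) ≤ ((mim (G.induce S) + (n - 1) : ℕ) : ℝ) := by exact_mod_cast hmain
      _ = (mim (G.induce S) : ℝ) + ((n : ℝ) - 1) := by push_cast [this]; ring
  calc (mim G : ℝ) ≤ (mim (G.induce S) : ℝ) + ((n : ℝ) - 1) := hcast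
    _ ≤ (10 : ℝ) ^ (((n : ℝ) - 1) / 5) + ((n : ℝ) - 1) := by
        linarith [hsub S hvS]
end

section
/- Let G be a graph, let u and v be adjacent vertices of G that are twins (N[u] = N[v]), and let M be a maximal induced matching of G containing an edge vp with p ≠ u. Then (M \ {vp}) ∪ {up} is also a maximal induced matching of G. -/
open SimpleGraph

/-!
Since `N[u] = N[v]`, the vertex `u` is separated (distinct and non-adjacent) from every vertex
that `v` is separated from, so replacing `vp` by `up` keeps the matching induced. The same
argument with the roles of `u` and `v` exchanged swaps back any induced matching `M' ⊇ M - vp + up`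
to an induced matching containing `M`, which by maximality of `M` forces `M' = M - vp + up`.
The two swaps are mutually inverse because two edges of an induced matching never share the
endpoint `p`.
-/

theorem Set.subset_diff_union_singleton_of_subset {α : Type*} {M M' : Set α} {e f : α}
    (h : M \ {e} ∪ {f} ⊆ M') (hf : f ∈ M → f = e) : M ⊆ M' \ {f} ∪ {e} := by
  intro g hg
  by_cases hge : g = e
  · exact Or.inr hge
  · exact Or.inl ⟨h (Or.inl ⟨hg, hge⟩), by rintro rfl; exact hge (hf hg)⟩

section SwapTwin

variable {V : Type*} {G : SimpleGraph V}

theorem adj_of_twin {u v b : V} (htwin : insert u (G.neighborSet u) = insert v (G.neighborSet v))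
    (hvb : G.Adj v b) (hbu : b ≠ u) : G.Adj u b := by
  have hb : b ∈ insert u (G.neighborSet u) := htwin ▸ Set.mem_insert_of_mem v hvb
  exact (Set.mem_insert_iff.mp hb).resolve_left hbu

theorem ne_and_not_adj_of_twin {u v b : V}
    (htwin : insert u (G.neighborSet u) = insert v (G.neighborSet v))
    (hvb : v ≠ b ∧ ¬G.Adj v b) : u ≠ b ∧ ¬G.Adj u b := by
  have hb : b ∉ insert v (G.neighborSet v) := by
    rintro (rfl | h)
    exacts [hvb.1 rfl, hvb.2 h]
  rw [← htwin] at hb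
  exact ⟨fun h => hb (Or.inl h.symm), fun h => hb (Or.inr h)⟩

namespace IsInducedMatching

variable {M N : Set (Sym2 V)}

theorem subset (hM : IsInducedMatching G M) (hNM : N ⊆ M) : IsInducedMatching G N :=
  ⟨hNM.trans hM.1, fun e he f hf => hM.2 e (hNM he) f (hNM hf)⟩

theorem eq_of_mem_of_mem (hM : IsInducedMatching G M) {e f : Sym2 V} {a : V}
    (he : e ∈ M) (hf : f ∈ M) (hae : a ∈ e) (haf : a ∈ f) : e = f := by
  by_contra hne
  exact (hM.2 e he f hf hne a hae a haf).1 rfl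

theorem union_singleton (hM : IsInducedMatching G M) {f : Sym2 V} (hf : f ∈ G.edgeSet)
    (hsep : ∀ g ∈ M, g ≠ f → ∀ a ∈ f, ∀ b ∈ g, a ≠ b ∧ ¬G.Adj a b) :
    IsInducedMatching G (M ∪ {f}) := by
  refine ⟨Set.union_subset hM.1 (Set.singleton_subset_iff.mpr hf), ?_⟩
  rintro e (he | rfl) g (hg | rfl) heg a ha b hb
  · exact hM.2 e he g hg heg a ha b hb
  · have hba := hsep e he heg b hb a ha
    exact ⟨hba.1.symm, fun h => hba.2 h.symm⟩
  · exact hsep g hg heg.symm a ha b hb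
  · exact absurd rfl heg

theorem swap_twin (hM : IsInducedMatching G M) {u v p : V}
    (htwin : insert u (G.neighborSet u) = insert v (G.neighborSet v))
    (hp : p ≠ u) (hvp : s(v, p) ∈ M) :
    IsInducedMatching G ((M \ {s(v, p)}) ∪ {s(u, p)}) := by
  refine (hM.subset Set.sdiff_subset).union_singleton (adj_of_twin htwin (hM.1 hvp) hp) ?_
  rintro g ⟨hg, hgvp⟩ - a ha b hb
  have hsep := hM.2 _ hvp g hg (Ne.symm hgvp)
  rcases Sym2.mem_iff.mp ha with rfl | rfl
  · exact ne_and_not_adj_of_twin htwin (hsep v (Sym2.mem_mk_left v p) b hb)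
  · exact hsep a (Sym2.mem_mk_right v a) b hb

end IsInducedMatching

end SwapTwin

theorem swap_twin_edge_maximal_general {V : Type*} (G : SimpleGraph V) (u v : V)
    (htwin : insert u (G.neighborSet u) = insert v (G.neighborSet v))
    (M : Set (Sym2 V)) (hM : IsMaximalInducedMatching G M)
    (p : V) (hp : p ≠ u) (hmem : s(v, p) ∈ M) :
    IsMaximalInducedMatching G ((M \ {s(v, p)}) ∪ {s(u, p)}) := by
  obtain ⟨hind, hmax⟩ := hM
  have hpv : p ≠ v := (G.ne_of_adj (hind.1 hmem)).symm
  refine ⟨hind.swap_twin htwin hp hmem, fun M' hM' hsub => ?_⟩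
  have hupM' : s(u, p) ∈ M' := hsub (Or.inr rfl)
  have hback : M' \ {s(u, p)} ∪ {s(v, p)} = M :=
    hmax _ (hM'.swap_twin htwin.symm hpv hupM') <|
      Set.subset_diff_union_singleton_of_subset hsub fun hupM =>
        hind.eq_of_mem_of_mem hupM hmem (Sym2.mem_mk_right u p) (Sym2.mem_mk_right v p)
  refine (Set.subset_diff_union_singleton_of_subset hback.subset fun hvpM' => ?_).antisymm hsub
  exact hM'.eq_of_mem_of_mem hvpM' hupM' (Sym2.mem_mk_right v p) (Sym2.mem_mk_right u p)

theorem swap_twin_edge_maximal {V : Type*} (G : SimpleGraph V) (u v : V)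
    (huv : G.Adj u v)
    (htwin : insert u (G.neighborSet u) = insert v (G.neighborSet v))
    (M : Set (Sym2 V)) (hM : IsMaximalInducedMatching G M)
    (p : V) (hp : p ≠ u) (hmem : s(v, p) ∈ M) :
    IsMaximalInducedMatching G ((M \ {s(v, p)}) ∪ {s(u, p)}) :=
  swap_twin_edge_maximal_general G u v htwin M hM p hp hmem
end
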